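/- arXiv:2009.04032 — 8 statements merged into one kernel-verified Lean document; each statement's English description precedes it below -/
import Mathlib

section
/- If a nonnegative vector a is weakly majorized by a nonnegative vector b, then for every real s ≥ 1 the entrywise power a^s is weakly majorized by b^s. -/
open Finset

/-- A vector rearranged in increasing order. -/
noncomputable def ascSort {n : ℕ} (a : Fin n → ℝ) : Fin n → ℝ :=
  a ∘ Tuple.sort a

/-- A vector rearranged in decreasing order. -/
noncomputable def descSort {n : ℕ} (a : Fin n → ℝ) : Fin n → ℝ :=
  fun i => ascSort a i.rev

/-- The sum of the entries of `a` with index at most `k`. -/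
noncomputable def partialSum {n : ℕ} (a : Fin n → ℝ) (k : Fin n) : ℝ :=
  ∑ i ∈ Finset.univ.filter (fun i => i ≤ k), a i

/-- The product of the entries of `a` with index at most `k`. -/
noncomputable def partialProd {n : ℕ} (a : Fin n → ℝ) (k : Fin n) : ℝ :=
  ∏ i ∈ Finset.univ.filter (fun i => i ≤ k), a i

/-- Weak majorization: partial sums of the decreasing rearrangement of `a` are
bounded by those of `b`. -/
def WeakMaj {n : ℕ} (a b : Fin n → ℝ) : Prop :=
  ∀ k : Fin n, partialSum (descSort a) k ≤ partialSum (descSort b) k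

/-!
Sort both vectors decreasingly as `x` and `y`; since `t ↦ t ^ s` is monotone on `[0, ∞)`,
sorting `a ^ s` gives `x ^ s`. By convexity `y_i ^ s - x_i ^ s ≥ s x_i ^ (s - 1) (y_i - x_i)`,
and the weights `s x_i ^ (s - 1)` are nonnegative and decrease with `i`. Abel summation against
the partial sums of `y - x`, which are nonnegative by hypothesis, shows that the partial sums of
`y ^ s - x ^ s` are nonnegative too.
-/

theorem Real.rpow_add_mul_rpow_sub_one_mul_sub_le {s x y : ℝ} (hs : 1 ≤ s) (hx : 0 ≤ x)
    (hy : 0 ≤ y) : x ^ s + s * x ^ (s - 1) * (y - x) ≤ y ^ s := by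
  rcases hx.eq_or_lt with rfl | hx
  · rcases hs.eq_or_lt with rfl | hs
    · simp
    · simp [Real.zero_rpow (by linarith : s ≠ 0), Real.zero_rpow (by linarith : s - 1 ≠ 0),
        Real.rpow_nonneg hy]
  calc x ^ s + s * x ^ (s - 1) * (y - x) = x ^ s * (1 + s * (y / x - 1)) := by
        rw [Real.rpow_sub_one hx.ne']; field_simp
    _ ≤ x ^ s * (1 + (y / x - 1)) ^ s := by
        gcongr
        exact one_add_mul_self_le_rpow_one_add (by linarith [div_nonneg hy hx.le]) hs
    _ = y ^ s := by
        rw [add_sub_cancel, ← Real.mul_rpow hx.le (div_nonneg hy hx.le), mul_div_cancel₀ _ hx.ne']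

theorem mul_sum_range_le_sum_range_mul {c d : ℕ → ℝ} {k : ℕ} (hc : ∀ i < k, c (i + 1) ≤ c i)
    (hd : ∀ j < k, 0 ≤ ∑ i ∈ range (j + 1), d i) :
    c k * ∑ i ∈ range (k + 1), d i ≤ ∑ i ∈ range (k + 1), c i * d i := by
  induction k with
  | zero => simp
  | succ k ih =>
    have hprev := ih (fun i hi => hc i (by omega)) (fun j hj => hd j (by omega))
    have hstep : c (k + 1) * ∑ i ∈ range (k + 1), d i ≤ c k * ∑ i ∈ range (k + 1), d i :=
      mul_le_mul_of_nonneg_right (hc k k.lt_succ_self) (hd k k.lt_succ_self)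
    rw [sum_range_succ d, sum_range_succ (fun i => c i * d i), mul_add]
    linarith

section

variable {n : ℕ} {f g : ℝ → ℝ} {I : Set ℝ}

theorem monotoneOn_of_le_add_mul_sub (hg0 : ∀ x ∈ I, 0 ≤ g x)
    (hfg : ∀ x ∈ I, ∀ y ∈ I, f x + g x * (y - x) ≤ f y) : MonotoneOn f I :=
  fun x hx y hy hxy => by nlinarith [hfg x hx y hy, hg0 x hx]

theorem sum_range_comp_le_of_sum_range_le (hg : MonotoneOn g I) (hg0 : ∀ x ∈ I, 0 ≤ g x)
    (hfg : ∀ x ∈ I, ∀ y ∈ I, f x + g x * (y - x) ≤ f y) {x y : ℕ → ℝ} {k : ℕ}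
    (hxI : ∀ i ≤ k, x i ∈ I) (hyI : ∀ i ≤ k, y i ∈ I) (hx : ∀ i < k, x (i + 1) ≤ x i)
    (hxy : ∀ j ≤ k, ∑ i ∈ range (j + 1), x i ≤ ∑ i ∈ range (j + 1), y i) :
    ∑ i ∈ range (k + 1), f (x i) ≤ ∑ i ∈ range (k + 1), f (y i) := by
  have hslope : ∀ i < k, g (x (i + 1)) ≤ g (x i) := fun i hi =>
    hg (hxI _ (by omega)) (hxI _ (by omega)) (hx i hi)
  have hpartial : ∀ j ≤ k, 0 ≤ ∑ i ∈ range (j + 1), (y i - x i) := fun j hj => by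
    rw [sum_sub_distrib]; linarith [hxy j hj]
  have habel := mul_sum_range_le_sum_range_mul (c := fun i => g (x i)) hslope
    (fun j hj => hpartial j hj.le)
  have hlast : 0 ≤ g (x k) * ∑ i ∈ range (k + 1), (y i - x i) :=
    mul_nonneg (hg0 _ (hxI k le_rfl)) (hpartial k le_rfl)
  have htangent : ∑ i ∈ range (k + 1), g (x i) * (y i - x i)
      ≤ ∑ i ∈ range (k + 1), (f (y i) - f (x i)) := by
    refine sum_le_sum fun i hi => ?_
    have hik : i ≤ k := Nat.lt_succ_iff.mp (mem_range.mp hi)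
    linarith [hfg _ (hxI i hik) _ (hyI i hik)]
  rw [sum_sub_distrib] at htangent
  linarith

theorem descSort_antitone (a : Fin n → ℝ) : Antitone (descSort a) :=
  fun _ _ hij => Tuple.monotone_sort a (Fin.rev_le_rev.mpr hij)

theorem descSort_comp {f : ℝ → ℝ} {a : Fin n → ℝ} (hf : MonotoneOn f (Set.range a)) :
    descSort (f ∘ a) = f ∘ descSort a := by
  have hsorted : ascSort (f ∘ a) = f ∘ ascSort a :=
    Tuple.unique_monotone (Tuple.monotone_sort _)
      fun _ _ hij => hf ⟨_, rfl⟩ ⟨_, rfl⟩ (Tuple.monotone_sort a hij)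
  funext i
  exact congrFun hsorted i.rev

theorem partialSum_comp_val (F : ℕ → ℝ) (k : Fin n) :
    partialSum (F ∘ Fin.val) k = ∑ i ∈ range (k + 1), F i := by
  have hrange : range (k + 1) = (univ.filter (· ≤ k)).map Fin.valEmbedding := by
    ext m
    simp only [mem_range, mem_map, mem_filter, mem_univ, true_and, Fin.valEmbedding_apply]
    exact ⟨fun hm => ⟨⟨m, by omega⟩, Fin.mk_le_of_le_val (by omega), rfl⟩,
      fun ⟨i, hik, hi⟩ => hi ▸ Nat.lt_succ_of_le hik⟩
  rw [partialSum, hrange, sum_map]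
  rfl

theorem WeakMaj.comp_of_le_add_mul_sub {a b : Fin n → ℝ}
    (hg : MonotoneOn g I) (hg0 : ∀ x ∈ I, 0 ≤ g x)
    (hfg : ∀ x ∈ I, ∀ y ∈ I, f x + g x * (y - x) ≤ f y) (ha : ∀ i, a i ∈ I)
    (hb : ∀ i, b i ∈ I) (hmaj : WeakMaj a b) : WeakMaj (f ∘ a) (f ∘ b) := by
  intro k
  have hf := monotoneOn_of_le_add_mul_sub hg0 hfg
  rw [descSort_comp (hf.mono (Set.range_subset_iff.mpr ha)),
    descSort_comp (hf.mono (Set.range_subset_iff.mpr hb))]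
  obtain ⟨x, hx⟩ : ∃ x : ℕ → ℝ, x ∘ Fin.val = descSort a :=
    ⟨_, Function.extend_comp Fin.val_injective _ 0⟩
  obtain ⟨y, hy⟩ : ∃ y : ℕ → ℝ, y ∘ Fin.val = descSort b :=
    ⟨_, Function.extend_comp Fin.val_injective _ 0⟩
  have hxi (i : ℕ) (hi : i < n) : x i = descSort a ⟨i, hi⟩ := congrFun hx ⟨i, hi⟩
  have hyi (i : ℕ) (hi : i < n) : y i = descSort b ⟨i, hi⟩ := congrFun hy ⟨i, hi⟩
  rw [← hx, ← hy, ← Function.comp_assoc, ← Function.comp_assoc, partialSum_comp_val,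
    partialSum_comp_val]
  refine sum_range_comp_le_of_sum_range_le hg hg0 hfg
    (fun i hi => hxi i (by omega) ▸ ha _) (fun i hi => hyi i (by omega) ▸ hb _)
    (fun i hi => ?_) (fun j hj => ?_)
  · rw [hxi i (by omega), hxi (i + 1) (by omega)]
    exact descSort_antitone a (Fin.mk_le_mk.mpr i.le_succ)
  · have hmaj_j := hmaj ⟨j, by omega⟩
    rwa [← hx, ← hy, partialSum_comp_val, partialSum_comp_val] at hmaj_j

end

theorem weakMaj_rpow {n : ℕ} (a b : Fin n → ℝ)
    (ha : ∀ i, 0 ≤ a i) (hb : ∀ i, 0 ≤ b i) (hmaj : WeakMaj a b) :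
    ∀ s : ℝ, 1 ≤ s → WeakMaj (fun i => a i ^ s) (fun i => b i ^ s) := by
  intro s hs
  refine WeakMaj.comp_of_le_add_mul_sub (f := (· ^ s)) (I := Set.Ici 0)
    (g := fun x => s * x ^ (s - 1)) ?_ ?_ ?_ ha hb hmaj
  · exact fun x hx y hy hxy => mul_le_mul_of_nonneg_left
      (Real.monotoneOn_rpow_Ici_of_exponent_nonneg (by linarith) hx hy hxy) (by linarith)
  · exact fun x hx => mul_nonneg (by linarith) (Real.rpow_nonneg hx _)
  · exact fun x hx y hy => Real.rpow_add_mul_rpow_sub_one_mul_sub_le hs hx hy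
end

section
/- If x ≺_w y and a ≺_w b are nonnegative vectors in ℝ^n each labeled in descending order, then the entrywise product xa is weakly majorized by yb, i.e., for each 1 ≤ k ≤ n, ∑_{i=1}^k x_i a_i ≤ ∑_{i=1}^k y_i b_i. -/
open Finset

/-! Both steps are Abel summation: weights that are nonnegative and decreasing preserve the
comparison of prefix sums. Weighting `x ≺ y` by `a` gives `x a ≺ y a`, and weighting `a ≺ b`
by `y` gives `y a ≺ y b`. -/

section Abel

variable {R : Type*} [CommRing R] [PartialOrder R] [IsOrderedRing R]

theorem sum_range_mul_le_sum_range_mul_of_antitoneOn {u v c : ℕ → R} {m : ℕ}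
    (hc : AntitoneOn c (Set.Iio m)) (hc0 : ∀ i < m, 0 ≤ c i)
    (huv : ∀ j ≤ m, ∑ i ∈ range j, u i ≤ ∑ i ∈ range j, v i) :
    ∑ i ∈ range m, u i * c i ≤ ∑ i ∈ range m, v i * c i := by
  induction m generalizing c with
  | zero => simp
  | succ m ih =>
    -- writing `c i = (c i - c m) + c m`, the shifted weights are again nonnegative and decreasing
    have split (w : ℕ → R) : ∑ i ∈ range (m + 1), w i * c i
        = ∑ i ∈ range m, w i * (c i - c m) + (∑ i ∈ range (m + 1), w i) * c m := by
      simp only [sum_range_succ, mul_sub, sum_sub_distrib, add_mul, sum_mul]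
      ring
    rw [split u, split v]
    gcongr ?_ + ?_
    · refine ih (fun i hi j hj hij => sub_le_sub_right (hc ?_ ?_ hij) _)
        (fun i hi => sub_nonneg.2 (hc ?_ ?_ hi.le)) (fun j hj => huv j (hj.trans m.le_succ))
      all_goals simp only [Set.mem_Iio] at *; omega
    · exact mul_le_mul_of_nonneg_right (huv _ le_rfl) (hc0 m m.lt_succ_self)

end Abel

section PartialSum

variable {n : ℕ}

theorem partialSum_eq_sum_range {f : Fin n → ℝ} {g : ℕ → ℝ} (hfg : ∀ i : Fin n, g i = f i)
    (k : Fin n) : partialSum f k = ∑ i ∈ range (k + 1), g i := by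
  have hk := k.isLt
  symm
  refine sum_bij (fun i hi => (⟨i, by rw [mem_range] at hi; omega⟩ : Fin n)) ?_ ?_ ?_
    (fun i _ => hfg ⟨i, _⟩)
  · intro i hi
    rw [mem_range] at hi
    simp only [mem_filter, mem_univ, true_and, Fin.le_def]
    omega
  · intro _ _ _ _ h
    simpa using h
  · intro i hi
    rw [mem_filter, Fin.le_def] at hi
    exact ⟨i, mem_range.2 (by omega), rfl⟩

theorem Fin.exists_nat_extension {α : Type*} [Nonempty α] (f : Fin n → α) :
    ∃ g : ℕ → α, ∀ i : Fin n, g i = f i :=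
  ⟨Function.extend Fin.val f fun _ => Classical.arbitrary α, Fin.val_injective.extend_apply _ _⟩

theorem partialSum_mul_le_partialSum_mul {u v c : Fin n → ℝ} (hc : Antitone c)
    (hc0 : ∀ i, 0 ≤ c i) (huv : ∀ k, partialSum u k ≤ partialSum v k) (k : Fin n) :
    partialSum (fun i => u i * c i) k ≤ partialSum (fun i => v i * c i) k := by
  obtain ⟨U, hU⟩ := Fin.exists_nat_extension u
  obtain ⟨V, hV⟩ := Fin.exists_nat_extension v
  obtain ⟨C, hC⟩ := Fin.exists_nat_extension c
  have hk := k.isLt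
  rw [partialSum_eq_sum_range (g := fun i => U i * C i) (by simp [hU, hC]),
    partialSum_eq_sum_range (g := fun i => V i * C i) (by simp [hV, hC])]
  refine sum_range_mul_le_sum_range_mul_of_antitoneOn (fun i hi j hj hij => ?_) (fun i hi => ?_)
    (fun j hj => ?_)
  · simp only [Set.mem_Iio] at hi hj
    rw [hC ⟨i, by omega⟩, hC ⟨j, by omega⟩]
    exact hc hij
  · rw [hC ⟨i, by omega⟩]
    exact hc0 _
  · rcases j with _ | j
    · simp
    · simpa only [partialSum_eq_sum_range hU, partialSum_eq_sum_range hV] using huv ⟨j, by omega⟩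

end PartialSum

theorem weakMaj_entrywise_prod_general {n : ℕ} (x y a b : Fin n → ℝ)
    (hy0 : ∀ i, 0 ≤ y i) (ha0 : ∀ i, 0 ≤ a i)
    (hy : Antitone y) (ha : Antitone a)
    (hxy : ∀ k : Fin n, partialSum x k ≤ partialSum y k)
    (hab : ∀ k : Fin n, partialSum a k ≤ partialSum b k) :
    ∀ k : Fin n, partialSum (fun i => x i * a i) k ≤ partialSum (fun i => y i * b i) k := by
  intro k
  calc partialSum (fun i => x i * a i) k ≤ partialSum (fun i => y i * a i) k :=
        partialSum_mul_le_partialSum_mul ha ha0 hxy k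
    _ ≤ partialSum (fun i => y i * b i) k := by
        simpa only [mul_comm (y _)] using partialSum_mul_le_partialSum_mul hy hy0 hab k

theorem weakMaj_entrywise_prod {n : ℕ} (x y a b : Fin n → ℝ)
    (hx0 : ∀ i, 0 ≤ x i) (hy0 : ∀ i, 0 ≤ y i) (ha0 : ∀ i, 0 ≤ a i) (hb0 : ∀ i, 0 ≤ b i)
    (hx : Antitone x) (hy : Antitone y) (ha : Antitone a) (hb : Antitone b)
    (hxy : ∀ k : Fin n, partialSum x k ≤ partialSum y k)
    (hab : ∀ k : Fin n, partialSum a k ≤ partialSum b k) :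
    ∀ k : Fin n, partialSum (fun i => x i * a i) k ≤ partialSum (fun i => y i * b i) k :=
  weakMaj_entrywise_prod_general x y a b hy0 ha0 hy ha hxy hab
end

section
/- If a and b are nonnegative vectors with a log-majorized by b and a majorized by b (i.e., both with equality in the n-th partial condition), then a is a permutation of b. -/
open Finset

/-!
Put `d i = log (b i) - log (a i)`. The prefix-product inequalities say exactly that the partial
sums of `d` are nonnegative (up to the first zero of `a`), so summation by parts against the
decreasing weights `a i` gives `0 ≤ ∑ a i * d i`. On the other hand `log t ≤ t - 1` gives
`a i * d i ≤ b i - a i`, strictly unless `a i = b i`, while `∑ (b i - a i) = 0`. Hence `a = b`.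
-/

open Real

theorem Finset.sum_range_mul_nonneg_of_antitone {w d : ℕ → ℝ} {m : ℕ} (hw : Antitone w)
    (hw0 : ∀ i, 0 ≤ w i) (hd : ∀ k < m, 0 < w k → 0 ≤ ∑ i ∈ range (k + 1), d i) :
    0 ≤ ∑ i ∈ range m, w i * d i := by
  -- `c` will be one of the coefficients `w (m - 1)` and `w i - w (i + 1)` of summation by parts.
  have key : ∀ k < m, ∀ c, 0 ≤ c → c ≤ w k → 0 ≤ c * ∑ i ∈ range (k + 1), d i := by
    intro k hk c hc hcw
    rcases (hw0 k).lt_or_eq with hwk | hwk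
    · exact mul_nonneg hc (hd k hk hwk)
    · simp [le_antisymm (hwk ▸ hcw) hc]
  have hparts := sum_range_by_parts w d m
  simp only [smul_eq_mul] at hparts
  rw [hparts]
  rcases Nat.eq_zero_or_pos m with rfl | hm
  · simp
  have hlast := key (m - 1) (by omega) _ (hw0 _) le_rfl
  rw [Nat.sub_add_cancel hm] at hlast
  have hsteps : ∑ i ∈ range (m - 1), (w (i + 1) - w i) * ∑ j ∈ range (i + 1), d j ≤ 0 := by
    refine sum_nonpos fun i hi => ?_
    have := key i (by grind) (w i - w (i + 1)) (by linarith [hw i.le_succ])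
      (by linarith [hw0 (i + 1)])
    linarith
  linarith

theorem Real.mul_log_sub_log_lt_sub {x y : ℝ} (hx : 0 ≤ x) (hy : 0 ≤ y) (hxy : 0 < x → 0 < y)
    (hne : x ≠ y) : x * (log y - log x) < y - x := by
  rcases hx.lt_or_eq with hx | rfl
  · have hy := hxy hx
    have hyx : y / x ≠ 1 := by rwa [ne_eq, div_eq_one_iff_eq hx.ne', eq_comm]
    calc x * (log y - log x) = x * log (y / x) := by rw [log_div hy.ne' hx.ne']
      _ < x * (y / x - 1) := mul_lt_mul_of_pos_left (log_lt_sub_one_of_pos (by positivity) hyx) hx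
      _ = y - x := by field_simp
  · simpa using lt_of_le_of_ne hy hne

theorem Real.mul_log_sub_log_le_sub {x y : ℝ} (hx : 0 ≤ x) (hy : 0 ≤ y) (hxy : 0 < x → 0 < y) :
    x * (log y - log x) ≤ y - x := by
  rcases eq_or_ne x y with rfl | hne
  · simp
  · exact (mul_log_sub_log_lt_sub hx hy hxy hne).le

theorem Fin.sum_mul_nonneg_of_antitone {n : ℕ} {w d : Fin n → ℝ} (hw : Antitone w)
    (hw0 : ∀ i, 0 ≤ w i) (hd : ∀ k, 0 < w k → 0 ≤ ∑ i ∈ Iic k, d i) :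
    0 ≤ ∑ i, w i * d i := by
  let extend (f : Fin n → ℝ) (j : ℕ) : ℝ := if h : j < n then f ⟨j, h⟩ else 0
  have extend_val (f : Fin n → ℝ) (i : Fin n) : extend f i = f i := by simp [extend]
  have sum_Iic (f : Fin n → ℝ) (k : Fin n) :
      ∑ i ∈ Iic k, f i = ∑ j ∈ range (k + 1), extend f j := by
    rw [Nat.range_succ_eq_Iic, ← Fin.map_valEmbedding_Iic, sum_map]
    simp [extend_val]
  have hext0 (j : ℕ) : 0 ≤ extend w j := by
    unfold extend; split_ifs <;> simp [hw0]
  have hext : Antitone (extend w) := by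
    intro i j hij
    unfold extend
    split_ifs with hj hi
    · exact hw (Fin.mk_le_mk.2 hij)
    · omega
    · exact hw0 _
    · rfl
  have hsum : ∑ i, w i * d i = ∑ j ∈ range n, extend w j * extend d j := by
    rw [← Fin.sum_univ_eq_sum_range (fun j => extend w j * extend d j)]
    simp only [extend_val]
  rw [hsum]
  refine sum_range_mul_nonneg_of_antitone hext hext0 fun k hk hpos => ?_
  simpa [sum_Iic] using hd ⟨k, hk⟩ (by simpa [extend, hk] using hpos)

theorem partialProd_eq_prod_Iic {n : ℕ} (a : Fin n → ℝ) (k : Fin n) :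
    partialProd a k = ∏ i ∈ Iic k, a i := by
  rw [partialProd, filter_ge_eq_Iic]

section PrefixProducts

variable {n : ℕ} {a b : Fin n → ℝ}

theorem pos_of_partialProd_le (hb0 : ∀ i, 0 ≤ b i) (ha : Antitone a)
    (hlog : ∀ k, partialProd a k ≤ partialProd b k) {k : Fin n} (hk : 0 < a k) : 0 < b k := by
  have hprod := hlog k
  rw [partialProd_eq_prod_Iic, partialProd_eq_prod_Iic] at hprod
  have hprod_pos : 0 < ∏ i ∈ Iic k, b i :=
    (prod_pos fun i hi => hk.trans_le (ha (mem_Iic.1 hi))).trans_le hprod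
  exact (hb0 k).lt_of_ne' fun hbk => hprod_pos.ne' (prod_eq_zero (mem_Iic.2 le_rfl) hbk)

theorem sum_log_sub_log_nonneg (hb0 : ∀ i, 0 ≤ b i) (ha : Antitone a)
    (hlog : ∀ k, partialProd a k ≤ partialProd b k) {k : Fin n} (hk : 0 < a k) :
    0 ≤ ∑ i ∈ Iic k, (log (b i) - log (a i)) := by
  have ha_pos : ∀ i ∈ Iic k, 0 < a i := fun i hi => hk.trans_le (ha (mem_Iic.1 hi))
  have hb_pos : ∀ i ∈ Iic k, 0 < b i := fun i hi =>
    pos_of_partialProd_le hb0 ha hlog (ha_pos i hi)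
  have hprod := hlog k
  rw [partialProd_eq_prod_Iic, partialProd_eq_prod_Iic] at hprod
  rw [sum_sub_distrib, ← log_prod fun i hi => (hb_pos i hi).ne',
    ← log_prod fun i hi => (ha_pos i hi).ne', sub_nonneg]
  exact log_le_log (prod_pos ha_pos) hprod

end PrefixProducts

theorem logMaj_and_maj_imp_perm_general {n : ℕ} (a b : Fin n → ℝ)
    (ha0 : ∀ i, 0 ≤ a i) (hb0 : ∀ i, 0 ≤ b i) (ha : Antitone a)
    (hlog : ∀ k : Fin n, partialProd a k ≤ partialProd b k)
    (hmajEq : ∑ i, a i = ∑ i, b i) :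
    ∃ e : Equiv.Perm (Fin n), a = b ∘ e := by
  have hpos {i : Fin n} : 0 < a i → 0 < b i := pos_of_partialProd_le hb0 ha hlog
  have habel : 0 ≤ ∑ i, a i * (log (b i) - log (a i)) :=
    Fin.sum_mul_nonneg_of_antitone ha ha0 fun k hk => sum_log_sub_log_nonneg hb0 ha hlog hk
  suffices a = b from ⟨Equiv.refl _, this⟩
  by_contra hne
  obtain ⟨j, hj⟩ := Function.ne_iff.1 hne
  have : ∑ i, a i * (log (b i) - log (a i)) < ∑ i, (b i - a i) :=
    sum_lt_sum (fun i _ => mul_log_sub_log_le_sub (ha0 i) (hb0 i) hpos)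
      ⟨j, mem_univ j, mul_log_sub_log_lt_sub (ha0 j) (hb0 j) hpos hj⟩
  rw [sum_sub_distrib, hmajEq, sub_self] at this
  linarith

theorem logMaj_and_maj_imp_perm {n : ℕ} (a b : Fin n → ℝ)
    (ha0 : ∀ i, 0 ≤ a i) (hb0 : ∀ i, 0 ≤ b i) (ha : Antitone a) (hb : Antitone b)
    (hlog : ∀ k : Fin n, partialProd a k ≤ partialProd b k)
    (hlogEq : ∏ i, a i = ∏ i, b i)
    (hmaj : ∀ k : Fin n, partialSum a k ≤ partialSum b k)
    (hmajEq : ∑ i, a i = ∑ i, b i) :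
    ∃ e : Equiv.Perm (Fin n), a = b ∘ e :=
  logMaj_and_maj_imp_perm_general a b ha0 hb0 ha hlog hmajEq
end

section
/- Let Φ : ℝ≥0 → ℝ≥0 be strictly convex and increasing. If a ≺_(log) b (log majorization) and ∑_{i=1}^n Φ(a_i) = ∑_{i=1}^n Φ(b_i), then a is a permutation of b. -/
open Finset

/-! Weyl's argument turns log majorization into weak majorization: on the prefix where `a` is
positive, so is `b`, and the Tomić–Weyl inequality for `exp` applied to `log a` and `log b` bounds
the partial sums. The Tomić–Weyl inequality `∑ f(cᵢ) ≤ ∑ f(dᵢ)` (for decreasing `c` whose partial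
sums are dominated by those of `d`, and `f` convex increasing) comes from the subgradient
inequality `f(dᵢ) - f(cᵢ) ≥ f'(cᵢ) (dᵢ - cᵢ)` with `f'` the left derivative: the weights `f'(cᵢ)`
are nonnegative and decreasing, so summation by parts makes `∑ f'(cᵢ) (dᵢ - cᵢ)` nonnegative.
For strictly convex `Φ` one subgradient inequality is strict as soon as `a ≠ b`, which
contradicts `∑ Φ(aᵢ) = ∑ Φ(bᵢ)`; hence `a = b`. -/

namespace ConvexOn

variable {f : ℝ → ℝ} {S : Set ℝ} {x y : ℝ}

lemma leftDeriv_mul_sub_le (hf : ConvexOn ℝ S f) (hx : x ∈ interior S) (hy : y ∈ S) :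
    derivWithin f (Set.Iio x) x * (y - x) ≤ f y - f x := by
  rcases lt_trichotomy x y with hxy | rfl | hyx
  · have h := (hf.leftDeriv_le_rightDeriv_of_mem_interior hx).trans
      (hf.rightDeriv_le_slope_of_mem_interior hx hy hxy)
    rwa [slope_def_field, le_div_iff₀ (sub_pos.2 hxy)] at h
  · simp
  · have h := hf.slope_le_leftDeriv_of_mem_interior hy hx hyx
    rw [slope_def_field, div_le_iff₀ (sub_pos.2 hyx)] at h
    linarith

lemma leftDeriv_nonneg (hf : ConvexOn ℝ S f) (hmono : MonotoneOn f S) (hx : x ∈ interior S) :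
    0 ≤ derivWithin f (Set.Iio x) x := by
  obtain ⟨l, u, ⟨hlx, hxu⟩, hlu⟩ := mem_nhds_iff_exists_Ioo_subset.1 (mem_interior_iff_mem_nhds.1 hx)
  obtain ⟨y, hly, hyx⟩ := exists_between hlx
  have hy : y ∈ S := hlu ⟨hly, hyx.trans hxu⟩
  exact (hmono.slope_nonneg hy (interior_subset hx)).trans
    (hf.slope_le_leftDeriv_of_mem_interior hy hx hyx)

lemma comp_max_const {a : ℝ} (hf : ConvexOn ℝ (Set.Ici a) f) (hmono : MonotoneOn f (Set.Ici a)) :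
    ConvexOn ℝ Set.univ (fun x => f (max x a)) := by
  have himage : (fun x => max x a) '' Set.univ = Set.Ici a :=
    Set.ext fun y => ⟨by rintro ⟨x, -, rfl⟩; exact le_max_right x a,
      fun hy => ⟨y, trivial, max_eq_left hy⟩⟩
  refine ConvexOn.comp (g := f) (f := fun x => max x a) ?_ ?_ ?_
  · rwa [himage]
  · exact convexOn_id convex_univ |>.sup (convexOn_const a convex_univ)
  · rwa [himage]

end ConvexOn

lemma MonotoneOn.comp_max_const {f : ℝ → ℝ} {a : ℝ} (hmono : MonotoneOn f (Set.Ici a)) :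
    Monotone (fun x => f (max x a)) := fun x y hxy =>
  hmono (le_max_right x a) (le_max_right y a) (max_le_max hxy le_rfl)

lemma StrictConvexOn.leftDeriv_mul_sub_lt {f : ℝ → ℝ} {S T : Set ℝ} {x y : ℝ}
    (hf : StrictConvexOn ℝ S f) (hfT : ConvexOn ℝ T f) (hxT : x ∈ interior T)
    (hx : x ∈ S) (hy : y ∈ S) (hxy : x ≠ y) :
    derivWithin f (Set.Iio x) x * (y - x) < f y - f x := by
  rcases hxy.lt_or_gt with hxy | hyx
  · have h := (hfT.leftDeriv_le_rightDeriv_of_mem_interior hxT).trans_lt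
      (hf.rightDeriv_lt_slope hx hy hxy (hfT.differentiableWithinAt_Ioi_of_mem_interior hxT))
    rwa [slope_def_field, lt_div_iff₀ (sub_pos.2 hxy)] at h
  · have h := hf.slope_lt_leftDeriv hy hx hyx (hfT.differentiableWithinAt_Iio_of_mem_interior hxT)
    rw [slope_def_field, div_lt_iff₀ (sub_pos.2 hyx)] at h
    linarith

lemma sum_range_mul_nonneg_of_antitoneOn {s e : ℕ → ℝ} {n : ℕ} (hs0 : ∀ i < n, 0 ≤ s i)
    (hs : AntitoneOn s (Set.Iio n)) (he : ∀ k ≤ n, 0 ≤ ∑ i ∈ range k, e i) :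
    0 ≤ ∑ i ∈ range n, s i * e i := by
  rcases n with _ | n
  · simp
  have hparts := sum_range_by_parts s e (n + 1)
  simp only [smul_eq_mul, Nat.add_sub_cancel] at hparts
  rw [hparts, sub_nonneg]
  refine (sum_nonpos fun i hi => ?_).trans (mul_nonneg (hs0 n n.lt_succ_self) (he _ le_rfl))
  have hi : i < n := mem_range.1 hi
  exact mul_nonpos_of_nonpos_of_nonneg
    (sub_nonpos.2 (hs (by simp; omega) (by simp; omega) i.le_succ)) (he _ (by omega))

section WeakMajorization

variable {f : ℝ → ℝ} {c d : ℕ → ℝ} {n : ℕ}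

lemma sum_range_leftDeriv_mul_sub_nonneg (hf : ConvexOn ℝ Set.univ f) (hmono : Monotone f)
    (hc : AntitoneOn c (Set.Iio n)) (hcd : ∀ k ≤ n, ∑ i ∈ range k, c i ≤ ∑ i ∈ range k, d i) :
    0 ≤ ∑ i ∈ range n, derivWithin f (Set.Iio (c i)) (c i) * (d i - c i) := by
  have hint : ∀ x, x ∈ interior (Set.univ : Set ℝ) := by simp
  refine sum_range_mul_nonneg_of_antitoneOn
    (fun i _ => hf.leftDeriv_nonneg (hmono.monotoneOn _) (hint _)) ?_ ?_
  · exact fun i hi j hj hij => hf.monotoneOn_leftDeriv (hint _) (hint _) (hc hi hj hij)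
  · intro k hk
    rw [sum_sub_distrib, sub_nonneg]
    exact hcd k hk

theorem ConvexOn.sum_range_comp_le_of_weakMaj (hf : ConvexOn ℝ Set.univ f) (hmono : Monotone f)
    (hc : AntitoneOn c (Set.Iio n)) (hcd : ∀ k ≤ n, ∑ i ∈ range k, c i ≤ ∑ i ∈ range k, d i) :
    ∑ i ∈ range n, f (c i) ≤ ∑ i ∈ range n, f (d i) := by
  have hterm : ∀ i ∈ range n,
      derivWithin f (Set.Iio (c i)) (c i) * (d i - c i) ≤ f (d i) - f (c i) :=
    fun i _ => hf.leftDeriv_mul_sub_le (by simp) trivial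
  have := (sum_range_leftDeriv_mul_sub_nonneg hf hmono hc hcd).trans (sum_le_sum hterm)
  rwa [sum_sub_distrib, sub_nonneg] at this

theorem StrictConvexOn.sum_range_comp_lt_of_weakMaj {S : Set ℝ} (hfS : StrictConvexOn ℝ S f)
    (hf : ConvexOn ℝ Set.univ f) (hmono : Monotone f)
    (hc : AntitoneOn c (Set.Iio n)) (hcd : ∀ k ≤ n, ∑ i ∈ range k, c i ≤ ∑ i ∈ range k, d i)
    (hcS : ∀ i < n, c i ∈ S) (hdS : ∀ i < n, d i ∈ S) {j : ℕ} (hj : j < n) (hne : c j ≠ d j) :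
    ∑ i ∈ range n, f (c i) < ∑ i ∈ range n, f (d i) := by
  have hterm : ∀ i ∈ range n,
      derivWithin f (Set.Iio (c i)) (c i) * (d i - c i) ≤ f (d i) - f (c i) :=
    fun i _ => hf.leftDeriv_mul_sub_le (by simp) trivial
  have hj' : derivWithin f (Set.Iio (c j)) (c j) * (d j - c j) < f (d j) - f (c j) :=
    hfS.leftDeriv_mul_sub_lt hf (by simp) (hcS j hj) (hdS j hj) hne
  have := (sum_range_leftDeriv_mul_sub_nonneg hf hmono hc hcd).trans_lt
    (sum_lt_sum hterm ⟨j, mem_range.2 hj, hj'⟩)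
  rwa [sum_sub_distrib, sub_pos] at this

end WeakMajorization

section LogMajorization

variable {a b : ℕ → ℝ} {n : ℕ}

lemma pos_of_prod_range_le (ha : ∀ i < n, 0 < a i) (hb : ∀ i < n, 0 ≤ b i)
    (hab : ∀ k ≤ n, ∏ i ∈ range k, a i ≤ ∏ i ∈ range k, b i) {j : ℕ} (hj : j < n) : 0 < b j := by
  refine (hb j hj).lt_of_ne fun hbj => ?_
  have hprod := hab (j + 1) hj
  rw [prod_eq_zero (mem_range.2 j.lt_succ_self) hbj.symm] at hprod
  exact hprod.not_gt (prod_pos fun i hi => ha i (by simp at hi; omega))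

lemma sum_range_le_of_prod_range_le_of_pos (ha : ∀ i < n, 0 < a i) (hb : ∀ i < n, 0 < b i)
    (hanti : AntitoneOn a (Set.Iio n)) (hab : ∀ k ≤ n, ∏ i ∈ range k, a i ≤ ∏ i ∈ range k, b i) :
    ∑ i ∈ range n, a i ≤ ∑ i ∈ range n, b i := by
  have hlog : ∀ k ≤ n, ∑ i ∈ range k, Real.log (a i) ≤ ∑ i ∈ range k, Real.log (b i) := by
    intro k hk
    rw [← Real.log_prod fun i hi => (ha i (by simp at hi; omega)).ne',
      ← Real.log_prod fun i hi => (hb i (by simp at hi; omega)).ne']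
    exact Real.log_le_log (prod_pos fun i hi => ha i (by simp at hi; omega)) (hab k hk)
  have hlog_anti : AntitoneOn (fun i => Real.log (a i)) (Set.Iio n) :=
    fun i hi j hj hij => Real.log_le_log (ha j hj) (hanti hi hj hij)
  calc ∑ i ∈ range n, a i = ∑ i ∈ range n, Real.exp (Real.log (a i)) :=
        sum_congr rfl fun i hi => (Real.exp_log (ha i (mem_range.1 hi))).symm
    _ ≤ ∑ i ∈ range n, Real.exp (Real.log (b i)) :=
        convexOn_exp.sum_range_comp_le_of_weakMaj Real.exp_monotone hlog_anti hlog
    _ = ∑ i ∈ range n, b i := sum_congr rfl fun i hi => Real.exp_log (hb i (mem_range.1 hi))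

theorem sum_range_le_of_prod_range_le (ha : ∀ i < n, 0 ≤ a i) (hb : ∀ i < n, 0 ≤ b i)
    (hanti : AntitoneOn a (Set.Iio n)) (hab : ∀ k ≤ n, ∏ i ∈ range k, a i ≤ ∏ i ∈ range k, b i) :
    ∀ k ≤ n, ∑ i ∈ range k, a i ≤ ∑ i ∈ range k, b i := by
  intro k hk
  induction k with
  | zero => simp
  | succ k ih =>
    rcases (ha k hk).eq_or_lt with hak | hak
    · rw [sum_range_succ, sum_range_succ, ← hak, add_zero]
      exact (ih (by omega)).trans (le_add_of_nonneg_right (hb k hk))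
    have ha' : ∀ i < k + 1, 0 < a i := fun i hi =>
      hak.trans_le (hanti (by simp; omega) (by simp; omega) (by omega))
    have hab' : ∀ j ≤ k + 1, ∏ i ∈ range j, a i ≤ ∏ i ∈ range j, b i :=
      fun j hj => hab j (by omega)
    refine sum_range_le_of_prod_range_le_of_pos ha'
      (fun i hi => pos_of_prod_range_le ha' (fun i hi => hb i (by omega)) hab' hi)
      (hanti.mono fun i hi => by simp at hi ⊢; omega) hab'

end LogMajorization

section ExtendByZero

variable {n : ℕ}

lemma Fin.prod_filter_le_eq_prod_range {M : Type*} [CommMonoid M] (f : ℕ → M) (k : Fin n) :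
    ∏ i ∈ univ.filter (fun i => i ≤ k), f i = ∏ i ∈ range (k + 1), f i := by
  rw [filter_ge_eq_Iic, Nat.range_succ_eq_Iic, ← Fin.map_valEmbedding_Iic, prod_map]
  rfl

lemma Fin.extend_val_apply_of_lt (a : Fin n → ℝ) {i : ℕ} (hi : i < n) :
    Function.extend Fin.val a 0 i = a ⟨i, hi⟩ :=
  Fin.val_injective.extend_apply a 0 ⟨i, hi⟩

lemma Antitone.antitoneOn_extend_val {a : Fin n → ℝ} (ha : Antitone a) :
    AntitoneOn (Function.extend Fin.val a 0) (Set.Iio n) := fun i hi j hj hij => by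
  rw [Fin.extend_val_apply_of_lt a hi, Fin.extend_val_apply_of_lt a hj]
  exact ha hij

lemma partialProd_eq_prod_range_extend_val (a : Fin n → ℝ) (k : Fin n) :
    partialProd a k = ∏ i ∈ range (k + 1), Function.extend Fin.val a 0 i := by
  rw [partialProd, ← Fin.prod_filter_le_eq_prod_range]
  simp only [Fin.val_injective.extend_apply]

lemma sum_comp_eq_sum_range_extend_val (g : ℝ → ℝ) (a : Fin n → ℝ) :
    ∑ i, g (a i) = ∑ i ∈ range n, g (Function.extend Fin.val a 0 i) := by
  rw [← Fin.sum_univ_eq_sum_range (fun i => g (Function.extend Fin.val a 0 i))]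
  simp only [Fin.val_injective.extend_apply]

lemma prod_range_extend_val_le_of_partialProd_le {a b : Fin n → ℝ}
    (hab : ∀ k : Fin n, partialProd a k ≤ partialProd b k) :
    ∀ k ≤ n, ∏ i ∈ range k, Function.extend Fin.val a 0 i ≤
      ∏ i ∈ range k, Function.extend Fin.val b 0 i
  | 0, _ => le_rfl
  | k + 1, hk => by
    simpa only [partialProd_eq_prod_range_extend_val] using hab ⟨k, hk⟩

end ExtendByZero

theorem logMaj_strictConvex_eq_imp_perm_general {n : ℕ} (Φ : ℝ → ℝ)
    (hΦconv : StrictConvexOn ℝ (Set.Ici (0 : ℝ)) Φ)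
    (hΦmono : MonotoneOn Φ (Set.Ici (0 : ℝ)))
    (a b : Fin n → ℝ)
    (ha0 : ∀ i, 0 ≤ a i) (hb0 : ∀ i, 0 ≤ b i) (ha : Antitone a)
    (hlog : ∀ k : Fin n, partialProd a k ≤ partialProd b k)
    (hΦeq : ∑ i, Φ (a i) = ∑ i, Φ (b i)) :
    ∃ e : Equiv.Perm (Fin n), a = b ∘ e := by
  refine ⟨Equiv.refl _, funext fun j => ?_⟩
  show a j = b j
  by_contra hj
  set c := Function.extend Fin.val a 0
  set d := Function.extend Fin.val b 0
  -- Φ is extended to all of `ℝ` so that its left derivative serves as a subgradient at `0`.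
  set Ψ : ℝ → ℝ := fun x => Φ (max x 0)
  have hΨ : StrictConvexOn ℝ (Set.Ici 0) Ψ :=
    hΦconv.congr fun x hx => by simp only [Ψ, max_eq_left (Set.mem_Ici.1 hx)]
  have hc0 : ∀ i < n, 0 ≤ c i := fun i hi => by
    simpa only [c, Fin.extend_val_apply_of_lt a hi] using ha0 _
  have hd0 : ∀ i < n, 0 ≤ d i := fun i hi => by
    simpa only [d, Fin.extend_val_apply_of_lt b hi] using hb0 _
  have hweak := sum_range_le_of_prod_range_le hc0 hd0 ha.antitoneOn_extend_val
    (prod_range_extend_val_le_of_partialProd_le hlog)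
  have hlt := hΨ.sum_range_comp_lt_of_weakMaj (hΦconv.convexOn.comp_max_const hΦmono)
    hΦmono.comp_max_const ha.antitoneOn_extend_val hweak hc0 hd0 j.isLt
    (by simpa only [c, d, Fin.val_injective.extend_apply] using hj)
  rw [← sum_comp_eq_sum_range_extend_val, ← sum_comp_eq_sum_range_extend_val] at hlt
  simp only [Ψ, max_eq_left (ha0 _), max_eq_left (hb0 _)] at hlt
  exact hlt.ne hΦeq

theorem logMaj_strictConvex_eq_imp_perm {n : ℕ} (Φ : ℝ → ℝ)
    (hΦconv : StrictConvexOn ℝ (Set.Ici (0 : ℝ)) Φ)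
    (hΦmono : MonotoneOn Φ (Set.Ici (0 : ℝ)))
    (hΦ0 : ∀ x : ℝ, 0 ≤ x → 0 ≤ Φ x)
    (a b : Fin n → ℝ)
    (ha0 : ∀ i, 0 ≤ a i) (hb0 : ∀ i, 0 ≤ b i) (ha : Antitone a) (hb : Antitone b)
    (hlog : ∀ k : Fin n, partialProd a k ≤ partialProd b k)
    (hlogEq : ∏ i, a i = ∏ i, b i)
    (hΦeq : ∑ i, Φ (a i) = ∑ i, Φ (b i)) :
    ∃ e : Equiv.Perm (Fin n), a = b ∘ e :=
  logMaj_strictConvex_eq_imp_perm_general Φ hΦconv hΦmono a b ha0 hb0 ha hlog hΦeq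
end

section
/- For self-adjoint n×n complex matrices A and B with AB + BA = 0 and 1 ≤ p ≤ 2, one has ‖A+B‖_p^p + ‖A−B‖_p^p ≥ ‖σ(A)+σ(B)‖_p^p + ‖σ(A)−σ(B)‖_p^p, where σ(X) denotes the vector of singular values in decreasing order and the norms on vectors are ℓ^p norms. -/
open Matrix Finset
open scoped ComplexOrder

/-- The singular values of a complex square matrix (in unspecified order). -/
noncomputable def sv {n : ℕ} (X : Matrix (Fin n) (Fin n) ℂ) : Fin n → ℝ :=
  fun i => Real.sqrt ((Matrix.posSemidef_conjTranspose_mul_self X).isHermitian.eigenvalues i)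

/-- Singular values arranged in increasing order. -/
noncomputable def svAsc {n : ℕ} (X : Matrix (Fin n) (Fin n) ℂ) : Fin n → ℝ :=
  sv X ∘ Tuple.sort (sv X)

/-- Singular values arranged in decreasing order. -/
noncomputable def svDesc {n : ℕ} (X : Matrix (Fin n) (Fin n) ℂ) : Fin n → ℝ :=
  fun i => svAsc X i.rev

/-- The p-th power of the p-Schatten norm: ‖X‖_p^p = ∑ σ_i(X)^p = Tr[(X*X)^{p/2}]. -/
noncomputable def schattenPow {n : ℕ} (p : ℝ) (X : Matrix (Fin n) (Fin n) ℂ) : ℝ :=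
  ∑ i, sv X i ^ p

open Equiv Polynomial Module.End

/-!
Anticommutation gives `(A ± B)ᴴ (A ± B) = A² + B²` with `A²` and `B²` commuting, so in a joint
eigenbasis the squared singular values of `A ± B` are `s (σ i) ^ 2 + t (τ i) ^ 2`, where `s`, `t`
are the decreasing singular values of `A`, `B` and `σ`, `τ` are permutations. Concavity of
`x ↦ x ^ (p / 2)` gives `|s i + t i| ^ p + |s i - t i| ^ p ≤ 2 (s i ^ 2 + t i ^ 2) ^ (p / 2)` and
makes `(x, y) ↦ (x ^ 2 + y ^ 2) ^ (p / 2)` submodular on `[0, ∞)²`, so by rearrangement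
`∑ i, (s i ^ 2 + t (ρ i) ^ 2) ^ (p / 2)` is smallest for `ρ = 1`.
-/

theorem ConcaveOn.map_add_map_le_of_add_eq {s : Set ℝ} {g : ℝ → ℝ} (hg : ConcaveOn ℝ s g)
    {x y z w : ℝ} (hx : x ∈ s) (hw : w ∈ s) (hy : y ∈ Set.Icc x w) (h : y + z = x + w) :
    g x + g w ≤ g y + g z := by
  rcases hy.1.eq_or_lt with rfl | hxy
  · obtain rfl : z = w := by linarith
    rfl
  have hxw : 0 < w - x := by linarith [hy.2]
  set μ := (w - y) / (w - x)
  have hμ : 0 ≤ μ := div_nonneg (by linarith [hy.2]) hxw.le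
  have hμ' : 0 ≤ 1 - μ := by
    rw [sub_nonneg, div_le_one hxw]; linarith
  have hgy := hg.2 hx hw hμ hμ' (by ring)
  have hgz := hg.2 hx hw hμ' hμ (by ring)
  have ey : μ • x + (1 - μ) • w = y := by simp only [μ, smul_eq_mul]; field_simp; ring
  have ez : (1 - μ) • x + μ • w = z := by
    rw [show z = x + w - y by linarith]; simp only [μ, smul_eq_mul]; field_simp; ring
  rw [ey] at hgy
  rw [ez] at hgz
  simp only [smul_eq_mul] at hgy hgz
  linarith

theorem rpow_sq_add_sq_exchange_le {p : ℝ} (hp0 : 0 ≤ p) (hp2 : p ≤ 2) {a a' b b' : ℝ}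
    (ha' : 0 ≤ a') (hb' : 0 ≤ b') (ha : a' ≤ a) (hb : b' ≤ b) :
    (a ^ 2 + b ^ 2) ^ (p / 2) + (a' ^ 2 + b' ^ 2) ^ (p / 2) ≤
      (a ^ 2 + b' ^ 2) ^ (p / 2) + (a' ^ 2 + b ^ 2) ^ (p / 2) := by
  have hconc := Real.concaveOn_rpow (p := p / 2) (by linarith) (by linarith)
  have hsa : a' ^ 2 ≤ a ^ 2 := pow_le_pow_left₀ ha' ha 2
  have hsb : b' ^ 2 ≤ b ^ 2 := pow_le_pow_left₀ hb' hb 2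
  rw [add_comm ((a ^ 2 + b ^ 2) ^ (p / 2))]
  exact hconc.map_add_map_le_of_add_eq (by simp; positivity) (by simp; positivity)
    ⟨by linarith, by linarith⟩ (by ring)

theorem abs_add_rpow_add_abs_sub_rpow_le {p : ℝ} (hp0 : 0 ≤ p) (hp2 : p ≤ 2) (a b : ℝ) :
    |a + b| ^ p + |a - b| ^ p ≤ 2 * (a ^ 2 + b ^ 2) ^ (p / 2) := by
  have hconc := Real.concaveOn_rpow (p := p / 2) (by linarith) (by linarith)
  have hmid := hconc.2 (sq_nonneg (a + b)) (sq_nonneg (a - b)) (by norm_num : (0:ℝ) ≤ 1 / 2)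
    (by norm_num : (0:ℝ) ≤ 1 / 2) (by norm_num)
  have habs (c : ℝ) : (c ^ 2) ^ (p / 2) = |c| ^ p := by
    rw [Real.rpow_div_two_eq_sqrt _ (sq_nonneg c), Real.sqrt_sq_eq_abs]
  simp only [smul_eq_mul, habs] at hmid
  have e : 1 / 2 * (a + b) ^ 2 + 1 / 2 * (a - b) ^ 2 = a ^ 2 + b ^ 2 := by ring
  rw [e] at hmid
  linarith

section Rearrangement

variable {ι α β γ : Type*} [Fintype ι] [DecidableEq ι] [AddCommMonoid γ] [PartialOrder γ]
  [IsOrderedAddMonoid γ] {F : α → β → γ} {f : ι → α} {g : ι → β}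

theorem sum_comp_swap_mul_le_sum_comp {σ : Perm ι} {a : ι} (ha : σ a ≠ a)
    (hF : F (f a) (g a) + F (f (σ⁻¹ a)) (g (σ a)) ≤
      F (f a) (g (σ a)) + F (f (σ⁻¹ a)) (g a)) :
    ∑ i, F (f i) (g ((swap a (σ a) * σ) i)) ≤ ∑ i, F (f i) (g (σ i)) := by
  set b := σ⁻¹ a
  have hσb : σ b = a := σ.apply_symm_apply a
  have hmem : b ∈ univ.erase a := mem_erase.2 ⟨fun h => ha (by simpa [h] using hσb), mem_univ b⟩
  have hrest : ∀ i ∈ (univ.erase a).erase b, (swap a (σ a) * σ) i = σ i := by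
    intro i hi
    obtain ⟨hib, hia⟩ : i ≠ b ∧ i ≠ a := by simpa using hi
    exact swap_apply_of_ne_of_ne (hσb ▸ σ.injective.ne hib) (σ.injective.ne hia)
  rw [← add_sum_erase _ _ (mem_univ a), ← add_sum_erase _ _ (mem_univ a),
    ← add_sum_erase _ _ hmem, ← add_sum_erase _ _ hmem, ← add_assoc, ← add_assoc,
    sum_congr rfl fun i hi => by rw [hrest i hi]]
  gcongr ?_ + _
  simpa [Perm.mul_apply, hσb] using hF

theorem Monovary.sum_le_sum_comp_perm_of_submodular [LinearOrder α] [LinearOrder β]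
    (hfg : Monovary f g)
    (hF : ∀ i j k l, f j ≤ f i → g l ≤ g k →
      F (f i) (g k) + F (f j) (g l) ≤ F (f i) (g l) + F (f j) (g k))
    (σ : Perm ι) : ∑ i, F (f i) (g i) ≤ ∑ i, F (f i) (g (σ i)) := by
  rcases eq_or_ne σ 1 with rfl | hσ
  · rfl
  -- undoing `σ` at the lexicographically largest moved index `a` fixes `a` and uses `hF` once
  obtain ⟨a, ha, hmax⟩ := σ.support.exists_max_image (fun i => toLex (g i, f i))
    (nonempty_iff_ne_empty.2 (mt Perm.support_eq_empty_iff.1 hσ))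
  have hga : g (σ a) ≤ g a := (Prod.Lex.le_iff.1 (hmax _ (Perm.apply_mem_support.2 ha))).elim
    le_of_lt (fun h => h.1.le)
  have hfa : f (σ⁻¹ a) ≤ f a := by
    have hb : σ⁻¹ a ∈ σ.support := by
      rw [← Perm.support_inv] at ha ⊢
      exact Perm.apply_mem_support.2 ha
    exact (Prod.Lex.le_iff.1 (hmax _ hb)).elim (fun h => hfg h) (fun h => h.2)
  calc ∑ i, F (f i) (g i)
      ≤ ∑ i, F (f i) (g ((swap a (σ a) * σ) i)) :=
        hfg.sum_le_sum_comp_perm_of_submodular hF _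
    _ ≤ ∑ i, F (f i) (g (σ i)) :=
        sum_comp_swap_mul_le_sum_comp (Perm.mem_support.1 ha) (hF _ _ _ _ hfa hga)
termination_by σ.support.card
decreasing_by exact Perm.card_support_swap_mul (Perm.mem_support.1 ha)

end Rearrangement

theorem sum_rpow_sq_add_sq_le_sum_comp_perm {ι : Type*} [Fintype ι] [DecidableEq ι] {p : ℝ}
    (hp0 : 0 ≤ p) (hp2 : p ≤ 2) {a b : ι → ℝ} (hab : Monovary a b) (ha : ∀ i, 0 ≤ a i)
    (hb : ∀ i, 0 ≤ b i) (ρ : Perm ι) :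
    ∑ i, (a i ^ 2 + b i ^ 2) ^ (p / 2) ≤ ∑ i, (a i ^ 2 + b (ρ i) ^ 2) ^ (p / 2) :=
  hab.sum_le_sum_comp_perm_of_submodular (F := fun x y => (x ^ 2 + y ^ 2) ^ (p / 2))
    (fun _ j _ l hj hl => rpow_sq_add_sq_exchange_le hp0 hp2 (ha j) (hb l) hj hl) ρ

theorem exists_perm_comp_eq_of_map_univ_eq {ι α : Type*} [Fintype ι] [DecidableEq α]
    {f g : ι → α} (h : univ.val.map f = univ.val.map g) : ∃ σ : Perm ι, f ∘ σ = g := by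
  classical
  have hcard (c : α) : Fintype.card {i // g i = c} = Fintype.card {i // f i = c} := by
    have := congrArg (Multiset.count c) h
    simp only [Multiset.count_map] at this
    simp only [Fintype.card_subtype, Finset.card, Finset.filter_val, eq_comm (b := c)]
    exact this.symm
  exact ⟨Equiv.ofFiberEquiv (fun c => Fintype.equivOfCardEq (hcard c)),
    funext (Equiv.ofFiberEquiv_map _)⟩

theorem LinearMap.charpoly_eq_prod_X_sub_C_of_basis {R M ι : Type*} [CommRing R]
    [AddCommGroup M] [Module R M] [Module.Free R M] [Module.Finite R M] [Fintype ι] [DecidableEq ι]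
    (f : Module.End R M) (w : Module.Basis ι R M) (d : ι → R) (hw : ∀ i, f (w i) = d i • w i) :
    f.charpoly = ∏ i, (X - C (d i)) := by
  have : LinearMap.toMatrix w w f = Matrix.diagonal d := by
    ext i j
    rcases eq_or_ne i j with rfl | hij
    · simp [LinearMap.toMatrix_apply, hw]
    · simp [LinearMap.toMatrix_apply, hw, hij]
  rw [← LinearMap.charpoly_toMatrix f w, this, Matrix.charpoly_diagonal]

theorem Matrix.IsHermitian.exists_perm_eigenvalues_eq_of_basis {𝕜 n : Type*} [RCLike 𝕜]
    [Fintype n] [DecidableEq n] {M : Matrix n n 𝕜} (hM : M.IsHermitian)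
    (w : Module.Basis n 𝕜 (EuclideanSpace 𝕜 n)) (d : n → 𝕜)
    (hw : ∀ i, Matrix.toEuclideanLin M (w i) = d i • w i) :
    ∃ σ : Perm n, ∀ i, (hM.eigenvalues (σ i) : 𝕜) = d i := by
  have hchar : M.charpoly = ∏ i, (X - C (d i)) := by
    rw [← (Matrix.toEuclideanLin M).charpoly_eq_prod_X_sub_C_of_basis w d hw,
      Matrix.toEuclideanLin_eq_toLin_orthonormal, Matrix.charpoly_toLin]
  have hroots : univ.val.map (RCLike.ofReal ∘ hM.eigenvalues) = univ.val.map d := by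
    rw [← hM.roots_charpoly_eq_eigenvalues, hchar, Polynomial.roots_prod _ _ (by
      simp [prod_ne_zero_iff, X_sub_C_ne_zero])]
    simp
  obtain ⟨σ, hσ⟩ := exists_perm_comp_eq_of_map_univ_eq hroots
  exact ⟨σ, congrFun hσ⟩

theorem LinearMap.IsSymmetric.exists_basis_eigenvectors_of_commute {𝕜 E ι : Type*} [RCLike 𝕜]
    [NormedAddCommGroup E] [InnerProductSpace 𝕜 E] [FiniteDimensional 𝕜 E] [Fintype ι]
    {S T : Module.End 𝕜 E} (hS : S.IsSymmetric) (hT : T.IsSymmetric) (hST : Commute S T)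
    (hι : Module.finrank 𝕜 E = Fintype.card ι) :
    ∃ (w : Module.Basis ι 𝕜 E) (a b : ι → 𝕜), ∀ i, S (w i) = a i • w i ∧ T (w i) = b i • w i := by
  classical
  let V : 𝕜 × 𝕜 → Submodule 𝕜 E := fun μ => eigenspace S μ.2 ⊓ eigenspace T μ.1
  have hV : DirectSum.IsInternal V := hS.directSum_isInternal_of_commute hT hST
  -- `subordinateOrthonormalBasis` needs a finite index set: keep the nonzero joint eigenspaces
  let V' : {μ // V μ ≠ ⊥} → Submodule 𝕜 E := fun μ => V μ
  have hV' : DirectSum.IsInternal V' := DirectSum.isInternal_ne_bot_iff.2 hV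
  have : Fintype {μ // V μ ≠ ⊥} :=
    (Submodule.finite_ne_bot_of_iSupIndep hV.submodule_iSupIndep).fintype
  have hV'orth := (hS.orthogonalFamily_eigenspace_inf_eigenspace hT).comp
    (f := ((↑) : {μ // V μ ≠ ⊥} → 𝕜 × 𝕜)) Subtype.val_injective
  let e := Fintype.equivFin ι
  let μ i := hV'.subordinateOrthonormalBasisIndex hι (e i) hV'orth
  refine ⟨(hV'.subordinateOrthonormalBasis hι hV'orth).toBasis.reindex e.symm,
    fun i => (μ i).1.2, fun i => (μ i).1.1, fun i => ?_⟩
  have hmem := hV'.subordinateOrthonormalBasis_subordinate hι (e i) hV'orth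
  simp only [Module.Basis.reindex_apply, Equiv.symm_symm, OrthonormalBasis.coe_toBasis]
  exact ⟨mem_eigenspace_iff.1 hmem.1, mem_eigenspace_iff.1 hmem.2⟩

theorem Matrix.IsHermitian.exists_perm_eigenvalues_add_of_commute {𝕜 n : Type*} [RCLike 𝕜]
    [Fintype n] [DecidableEq n] {P Q : Matrix n n 𝕜} (hP : P.IsHermitian) (hQ : Q.IsHermitian)
    (hPQ : Commute P Q) :
    ∃ σ τ : Perm n, ∀ i,
      (hP.add hQ).eigenvalues i = hP.eigenvalues (σ i) + hQ.eigenvalues (τ i) := by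
  have hS := Matrix.isSymmetric_toEuclideanLin_iff.2 hP
  have hT := Matrix.isSymmetric_toEuclideanLin_iff.2 hQ
  have hST : Commute (Matrix.toEuclideanLin P) (Matrix.toEuclideanLin Q) :=
    hPQ.map (Matrix.toLpLinAlgEquiv 2)
  obtain ⟨w, a, b, hw⟩ := hS.exists_basis_eigenvectors_of_commute hT hST
    (finrank_euclideanSpace (𝕜 := 𝕜) (ι := n))
  obtain ⟨σ, hσ⟩ := hP.exists_perm_eigenvalues_eq_of_basis w a fun i => (hw i).1
  obtain ⟨τ, hτ⟩ := hQ.exists_perm_eigenvalues_eq_of_basis w b fun i => (hw i).2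
  obtain ⟨ρ, hρ⟩ := (hP.add hQ).exists_perm_eigenvalues_eq_of_basis w (a + b) fun i => by
    simp [add_smul, (hw i).1, (hw i).2]
  refine ⟨ρ.symm.trans σ, ρ.symm.trans τ, fun i => ?_⟩
  have := hρ (ρ.symm i)
  rw [Equiv.apply_symm_apply, Pi.add_apply, ← hσ, ← hτ] at this
  exact_mod_cast this

theorem IsSelfAdjoint.star_add_mul_add_of_anticommute {R : Type*} [Ring R] [StarRing R]
    {a b : R} (ha : IsSelfAdjoint a) (hb : IsSelfAdjoint b) (h : a * b + b * a = 0) :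
    star (a + b) * (a + b) = star a * a + star b * b := by
  rw [star_add, ha.star_eq, hb.star_eq]
  calc (a + b) * (a + b) = a * a + b * b + (a * b + b * a) := by noncomm_ring
    _ = a * a + b * b := by rw [h, add_zero]

theorem IsSelfAdjoint.star_sub_mul_sub_of_anticommute {R : Type*} [Ring R] [StarRing R]
    {a b : R} (ha : IsSelfAdjoint a) (hb : IsSelfAdjoint b) (h : a * b + b * a = 0) :
    star (a - b) * (a - b) = star a * a + star b * b := by
  rw [star_sub, ha.star_eq, hb.star_eq]
  calc (a - b) * (a - b) = a * a + b * b - (a * b + b * a) := by noncomm_ring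
    _ = a * a + b * b := by rw [h, sub_zero]

theorem commute_mul_self_left_of_anticommute {R : Type*} [Ring R] {a b : R}
    (h : a * b + b * a = 0) : Commute (a * a) b := by
  have hab : a * b = -(b * a) := eq_neg_of_add_eq_zero_left h
  show a * a * b = b * (a * a)
  rw [mul_assoc, hab, mul_neg, ← mul_assoc, hab, neg_mul, neg_neg, mul_assoc]

section SingularValues

variable {n : ℕ}

theorem sv_nonneg (X : Matrix (Fin n) (Fin n) ℂ) (i : Fin n) : 0 ≤ sv X i :=
  Real.sqrt_nonneg _

theorem sv_sq_eq_eigenvalues {X M : Matrix (Fin n) (Fin n) ℂ} (hM : M.IsHermitian)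
    (h : Xᴴ * X = M) (i : Fin n) : sv X i ^ 2 = hM.eigenvalues i := by
  subst h
  exact Real.sq_sqrt ((posSemidef_conjTranspose_mul_self X).eigenvalues_nonneg i)

theorem sv_eq_of_conjTranspose_mul_self_eq {X Y : Matrix (Fin n) (Fin n) ℂ}
    (h : Xᴴ * X = Yᴴ * Y) : sv X = sv Y := by
  have := (IsHermitian.eigenvalues_eq_eigenvalues_iff
    (posSemidef_conjTranspose_mul_self X).isHermitian
    (posSemidef_conjTranspose_mul_self Y).isHermitian).2 (by rw [h])
  exact funext fun i => congrArg (fun e : Fin n → ℝ => Real.sqrt (e i)) this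

theorem svDesc_nonneg (X : Matrix (Fin n) (Fin n) ℂ) (i : Fin n) : 0 ≤ svDesc X i :=
  sv_nonneg X _

theorem antitone_svDesc (X : Matrix (Fin n) (Fin n) ℂ) : Antitone (svDesc X) :=
  fun _ _ hij => Tuple.monotone_sort (sv X) (Fin.rev_le_rev.2 hij)

theorem exists_perm_sv_eq_svDesc (X : Matrix (Fin n) (Fin n) ℂ) :
    ∃ π : Perm (Fin n), ∀ i, sv X i = svDesc X (π i) :=
  ⟨(Tuple.sort (sv X)).symm.trans Fin.revPerm, fun i => by
    simp only [svDesc, svAsc, Equiv.trans_apply, Fin.revPerm_apply, Fin.rev_rev,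
      Function.comp_apply, Equiv.apply_symm_apply]⟩

theorem schattenPow_eq_sum_sq_rpow (p : ℝ) (X : Matrix (Fin n) (Fin n) ℂ) :
    schattenPow p X = ∑ i, (sv X i ^ 2) ^ (p / 2) := by
  simp only [schattenPow, Real.rpow_div_two_eq_sqrt _ (sq_nonneg _), Real.sqrt_sq (sv_nonneg X _)]

theorem sv_sub_eq_sv_add_of_anticommute {A B : Matrix (Fin n) (Fin n) ℂ} (hA : A.IsHermitian)
    (hB : B.IsHermitian) (hanti : A * B + B * A = 0) : sv (A - B) = sv (A + B) :=
  sv_eq_of_conjTranspose_mul_self_eq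
    ((hA.isSelfAdjoint.star_sub_mul_sub_of_anticommute hB.isSelfAdjoint hanti).trans
      (hA.isSelfAdjoint.star_add_mul_add_of_anticommute hB.isSelfAdjoint hanti).symm)

theorem exists_perm_sv_add_sq_eq {A B : Matrix (Fin n) (Fin n) ℂ} (hA : A.IsHermitian)
    (hB : B.IsHermitian) (hanti : A * B + B * A = 0) :
    ∃ σ τ : Perm (Fin n), ∀ i, sv (A + B) i ^ 2 = svDesc A (σ i) ^ 2 + svDesc B (τ i) ^ 2 := by
  have hP := (posSemidef_conjTranspose_mul_self A).isHermitian
  have hQ := (posSemidef_conjTranspose_mul_self B).isHermitian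
  have hcomm : Commute (Aᴴ * A) (Bᴴ * B) := by
    rw [hA.eq, hB.eq]
    have := commute_mul_self_left_of_anticommute hanti
    exact this.mul_right this
  obtain ⟨σ, τ, hστ⟩ := hP.exists_perm_eigenvalues_add_of_commute hQ hcomm
  obtain ⟨πA, hπA⟩ := exists_perm_sv_eq_svDesc A
  obtain ⟨πB, hπB⟩ := exists_perm_sv_eq_svDesc B
  refine ⟨σ.trans πA, τ.trans πB, fun i => ?_⟩
  rw [sv_sq_eq_eigenvalues (hP.add hQ)
      (hA.isSelfAdjoint.star_add_mul_add_of_anticommute hB.isSelfAdjoint hanti) i,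
    hστ, Equiv.trans_apply, Equiv.trans_apply, ← hπA, ← hπB, sv_sq_eq_eigenvalues hP rfl,
    sv_sq_eq_eigenvalues hQ rfl]

end SingularValues

theorem anticommute_rearrangement_le_two {n : ℕ}
    (A B : Matrix (Fin n) (Fin n) ℂ) (hA : A.IsHermitian) (hB : B.IsHermitian)
    (hanti : A * B + B * A = 0) (p : ℝ) (hp1 : 1 ≤ p) (hp2 : p ≤ 2) :
    (∑ i, |svDesc A i + svDesc B i| ^ p) + (∑ i, |svDesc A i - svDesc B i| ^ p) ≤
      schattenPow p (A + B) + schattenPow p (A - B) := by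
  obtain ⟨σ, τ, hστ⟩ := exists_perm_sv_add_sq_eq hA hB hanti
  set a := svDesc A
  set b := svDesc B
  calc (∑ i, |a i + b i| ^ p) + ∑ i, |a i - b i| ^ p
      ≤ 2 * ∑ i, (a i ^ 2 + b i ^ 2) ^ (p / 2) := by
        rw [← sum_add_distrib, mul_sum]
        gcongr with i
        exact abs_add_rpow_add_abs_sub_rpow_le (by linarith) hp2 _ _
    _ ≤ 2 * ∑ i, (a i ^ 2 + b ((σ.symm.trans τ) i) ^ 2) ^ (p / 2) := by
        gcongr 2 * ?_
        exact sum_rpow_sq_add_sq_le_sum_comp_perm (by linarith) hp2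
          ((antitone_svDesc A).monovary (antitone_svDesc B)) (svDesc_nonneg A) (svDesc_nonneg B) _
    _ = 2 * ∑ i, (a (σ i) ^ 2 + b (τ i) ^ 2) ^ (p / 2) := by
        rw [← Equiv.sum_comp σ]
        simp
    _ = schattenPow p (A + B) + schattenPow p (A - B) := by
        simp only [sv_sub_eq_sv_add_of_anticommute hA hB hanti, schattenPow_eq_sum_sq_rpow, hστ]
        ring
end

section
/- For any two unitary n×n complex matrices U and V and 1 ≤ p ≤ 2, ‖U+V‖_p^p + ‖U−V‖_p^p ≥ 2^p · n, with the inequality reversing for p ≥ 2. -/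
/-!
With `A = (U + V)ᴴ (U + V)` and `B = (U - V)ᴴ (U - V)`, the parallelogram law and unitarity give
`A + B = 4`, so `B = 4 - A` and the eigenvalues of `B` are the `4 - aᵢ`, where the `aᵢ ∈ [0, 4]`
are those of `A`. Both Schatten sums together are thus `∑ᵢ aᵢ ^ (p/2) + (4 - aᵢ) ^ (p/2)`, and
each term is compared with `4 ^ (p/2) = 2 ^ p` by subadditivity (`p ≤ 2`) or superadditivity
(`p ≥ 2`) of `t ↦ t ^ (p/2)`.
-/

open Matrix Finset
open scoped ComplexOrder

theorem star_add_mul_add_add_star_sub_mul_sub {R : Type*} [Ring R] [StarRing R] (a b : R) :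
    star (a + b) * (a + b) + star (a - b) * (a - b) = 2 * (star a * a + star b * b) := by
  simp only [star_add, star_sub, add_mul, sub_mul, mul_add, mul_sub, two_mul]
  abel

theorem star_sub_mul_sub_eq_four_sub_of_mem_unitary {R : Type*} [Ring R] [StarRing R] {a b : R}
    (ha : a ∈ unitary R) (hb : b ∈ unitary R) :
    star (a - b) * (a - b) = 4 - star (a + b) * (a + b) := by
  have h := star_add_mul_add_add_star_sub_mul_sub a b
  rw [Unitary.star_mul_self_of_mem ha, Unitary.star_mul_self_of_mem hb] at h
  rw [eq_sub_iff_add_eq', h]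
  norm_num

namespace Matrix.IsHermitian

variable {𝕜 n : Type*} [RCLike 𝕜] [Fintype n] [DecidableEq n] {A B : Matrix n n 𝕜}

open Polynomial in
theorem map_eigenvalues_cfc (hA : A.IsHermitian) (hB : B.IsHermitian) {f : ℝ → ℝ}
    (hBA : B = cfc f A) :
    univ.val.map hB.eigenvalues = univ.val.map (f ∘ hA.eigenvalues) := by
  apply Multiset.map_injective (RCLike.ofReal_injective (K := 𝕜))
  rw [Multiset.map_map, Multiset.map_map, ← hB.roots_charpoly_eq_eigenvalues, hBA,
    hA.charpoly_cfc_eq, roots_prod _ _ (prod_ne_zero_iff.mpr fun i _ => X_sub_C_ne_zero _)]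
  simp

theorem sum_comp_eigenvalues_cfc (hA : A.IsHermitian) (hB : B.IsHermitian) {f : ℝ → ℝ}
    (hBA : B = cfc f A) (g : ℝ → ℝ) :
    ∑ i, g (hB.eigenvalues i) = ∑ i, g (f (hA.eigenvalues i)) := by
  have h := congrArg (fun m => (m.map g).sum) (hA.map_eigenvalues_cfc hB hBA)
  simp only [Multiset.map_map] at h
  rw [sum_eq_multiset_sum, sum_eq_multiset_sum]
  exact h

theorem exists_eigenvalues_cfc_eq (hA : A.IsHermitian) (hB : B.IsHermitian) {f : ℝ → ℝ}
    (hBA : B = cfc f A) (i : n) : ∃ j, hB.eigenvalues j = f (hA.eigenvalues i) := by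
  have hi : f (hA.eigenvalues i) ∈ univ.val.map hB.eigenvalues := by
    rw [hA.map_eigenvalues_cfc hB hBA]
    exact Multiset.mem_map_of_mem _ (mem_univ i)
  obtain ⟨j, -, hj⟩ := Multiset.mem_map.mp hi
  exact ⟨j, hj⟩

end Matrix.IsHermitian

theorem schattenPow_eq_sum_eigenvalues_rpow {n : ℕ} (p : ℝ) (X : Matrix (Fin n) (Fin n) ℂ) :
    schattenPow p X =
      ∑ i, (posSemidef_conjTranspose_mul_self X).isHermitian.eigenvalues i ^ (p / 2) :=
  sum_congr rfl fun i _ =>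
    (Real.rpow_div_two_eq_sqrt p ((posSemidef_conjTranspose_mul_self X).eigenvalues_nonneg i)).symm

theorem four_rpow_half (p : ℝ) : (4 : ℝ) ^ (p / 2) = 2 ^ p := by
  rw [show (4 : ℝ) = 2 ^ (2 : ℝ) by norm_num, ← Real.rpow_mul zero_le_two]
  ring_nf

theorem two_rpow_le_rpow_half_add_rpow_half {x y p : ℝ} (hx : 0 ≤ x) (hy : 0 ≤ y)
    (hxy : x + y = 4) (hp1 : 1 ≤ p) (hp2 : p ≤ 2) :
    2 ^ p ≤ x ^ (p / 2) + y ^ (p / 2) := by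
  simpa only [hxy, four_rpow_half] using
    Real.rpow_add_le_add_rpow hx hy (by linarith) (by linarith : p / 2 ≤ 1)

theorem rpow_half_add_rpow_half_le_two_rpow {x y p : ℝ} (hx : 0 ≤ x) (hy : 0 ≤ y)
    (hxy : x + y = 4) (hp : 2 ≤ p) :
    x ^ (p / 2) + y ^ (p / 2) ≤ 2 ^ p := by
  simpa only [hxy, four_rpow_half] using
    Real.add_rpow_le_rpow_add hx hy (by linarith : 1 ≤ p / 2)

theorem unitary_schatten_bound {n : ℕ}
    (U V : Matrix (Fin n) (Fin n) ℂ)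
    (hU : U ∈ Matrix.unitaryGroup (Fin n) ℂ) (hV : V ∈ Matrix.unitaryGroup (Fin n) ℂ)
    (p : ℝ) :
    (1 ≤ p → p ≤ 2 →
      (2 : ℝ) ^ p * n ≤ schattenPow p (U + V) + schattenPow p (U - V)) ∧
    (2 ≤ p →
      schattenPow p (U + V) + schattenPow p (U - V) ≤ (2 : ℝ) ^ p * n) := by
  have hA := posSemidef_conjTranspose_mul_self (U + V)
  have hB := posSemidef_conjTranspose_mul_self (U - V)
  have hBA : (U - V)ᴴ * (U - V) = cfc (fun x : ℝ => 4 - x) ((U + V)ᴴ * (U + V)) := by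
    rw [cfc_sub (fun _ => 4) (fun x => x) _, cfc_const _ _ hA.isHermitian.isSelfAdjoint,
      cfc_id' ℝ _ hA.isHermitian.isSelfAdjoint, map_ofNat]
    exact star_sub_mul_sub_eq_four_sub_of_mem_unitary hU hV
  have hle : ∀ i, 0 ≤ 4 - hA.isHermitian.eigenvalues i := fun i => by
    obtain ⟨j, hj⟩ := hA.isHermitian.exists_eigenvalues_cfc_eq hB.isHermitian hBA i
    exact hj ▸ hB.eigenvalues_nonneg j
  have hsum : schattenPow p (U + V) + schattenPow p (U - V) =
      ∑ i, (hA.isHermitian.eigenvalues i ^ (p / 2) +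
        (4 - hA.isHermitian.eigenvalues i) ^ (p / 2)) := by
    rw [schattenPow_eq_sum_eigenvalues_rpow, schattenPow_eq_sum_eigenvalues_rpow,
      hA.isHermitian.sum_comp_eigenvalues_cfc hB.isHermitian hBA (· ^ (p / 2)), sum_add_distrib]
  have hconst : (2 : ℝ) ^ p * n = ∑ _i : Fin n, (2 : ℝ) ^ p := by simp [mul_comm]
  rw [hsum, hconst]
  exact ⟨fun hp1 hp2 => sum_le_sum fun i _ => two_rpow_le_rpow_half_add_rpow_half
      (hA.eigenvalues_nonneg i) (hle i) (add_sub_cancel _ _) hp1 hp2,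
    fun hp => sum_le_sum fun i _ => rpow_half_add_rpow_half_le_two_rpow
      (hA.eigenvalues_nonneg i) (hle i) (add_sub_cancel _ _) hp⟩
end

section
/- The function F(x, y) = |x+y|^p + |x−y|^p on ℝ≥0 × ℝ≥0 satisfies F(u_2, v_2) + F(u_1, v_1) ≤ F(u_2, v_1) + F(u_1, v_2) whenever u_1 ≥ u_2 ≥ 0 and v_1 ≥ v_2 ≥ 0, for 1 ≤ p ≤ 2; the inequality reverses for p ≥ 2. -/
/-!
With `φ = |·| ^ p` one has `∂F/∂y (x, y) = φ' (x + y) - φ' (x - y)`, where `φ'` is the odd extension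
of `t ↦ p t ^ (p - 1)`: convex on `[0, ∞)` for `p ≥ 2`, concave for `p ≤ 2`. If `ψ` is the odd
extension of a convex `g` with `g 0 ≤ 0`, then `u ↦ ψ (u + w) - ψ (u - w)` is monotone on `[0, ∞)`
for `w ≥ 0`: increments of `g` over intervals of equal length grow to the right, and `g` is
superadditive. Hence `y ↦ F (u₁, y) - F (u₂, y)` is monotone for `u₁ ≥ u₂ ≥ 0`, and applying the same
argument to `-φ` gives the concave case. At `p = 1`, `F (x, y) = 2 max x y` on the quadrant, and
`max` is submodular.
-/

open Set

noncomputable def oddExt (f : ℝ → ℝ) (s : ℝ) : ℝ := if 0 ≤ s then f s else -f (-s)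

section OddExt

variable {f : ℝ → ℝ}

theorem oddExt_of_nonneg {s : ℝ} (hs : 0 ≤ s) : oddExt f s = f s := if_pos hs

theorem oddExt_of_neg {s : ℝ} (hs : s < 0) : oddExt f s = -f (-s) := if_neg hs.not_ge

theorem oddExt_neg : oddExt (-f) = -oddExt f := by
  funext s
  simp only [oddExt, Pi.neg_apply]
  split_ifs <;> rfl

theorem ConvexOn.map_sub_map_le_of_sub_eq {S : Set ℝ} (hf : ConvexOn ℝ S f) {a b c d : ℝ}
    (ha : a ∈ S) (hd : d ∈ S) (hab : a ≤ b) (hac : a ≤ c) (hbd : b - a = d - c) :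
    f b - f a ≤ f d - f c := by
  rcases (show a ≤ d by linarith).eq_or_lt with rfl | had
  · obtain rfl : b = a := by linarith
    obtain rfl : c = b := by linarith
    rfl
  -- `b` and `c` are the convex combinations of `a` and `d` with swapped weights
  set t := (c - a) / (d - a)
  have ht₀ : 0 ≤ t := div_nonneg (by linarith) (by linarith)
  have ht₁ : t ≤ 1 := (div_le_one (by linarith)).2 (by linarith)
  have hb : t • a + (1 - t) • d = b := by
    simp only [smul_eq_mul, t]; rw [show b = a + d - c by linarith]; field_simp; ring
  have hc : (1 - t) • a + t • d = c := by
    simp only [smul_eq_mul, t]; field_simp; ring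
  have h₁ := hf.2 ha hd ht₀ (by linarith) (add_sub_cancel t 1)
  have h₂ := hf.2 ha hd (by linarith) ht₀ (sub_add_cancel 1 t)
  rw [hb] at h₁
  rw [hc] at h₂
  simp only [smul_eq_mul] at h₁ h₂
  linarith

theorem ConvexOn.monotoneOn_oddExt_add_sub_oddExt_sub (hf : ConvexOn ℝ (Ici 0) f)
    (hf₀ : f 0 ≤ 0) {w : ℝ} (hw : 0 ≤ w) :
    MonotoneOn (fun u => oddExt f (u + w) - oddExt f (u - w)) (Ici 0) := by
  intro u₂ (hu₂ : 0 ≤ u₂) u₁ (hu₁ : 0 ≤ u₁) hu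
  have incr := fun {a b c d : ℝ} (ha : 0 ≤ a) (hd : 0 ≤ d) =>
    hf.map_sub_map_le_of_sub_eq (b := b) (c := c) (mem_Ici.2 ha) (mem_Ici.2 hd)
  dsimp only
  rw [oddExt_of_nonneg (by linarith : 0 ≤ u₂ + w), oddExt_of_nonneg (by linarith : 0 ≤ u₁ + w)]
  rcases le_or_gt 0 (u₂ - w) with h₂ | h₂
  · rw [oddExt_of_nonneg h₂, oddExt_of_nonneg (by linarith : 0 ≤ u₁ - w)]
    linarith [incr (a := u₂ - w) (b := u₁ - w) (c := u₂ + w) (d := u₁ + w)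
      h₂ (by linarith) (by linarith) (by linarith) (by ring)]
  rw [oddExt_of_neg h₂]
  rcases lt_or_ge (u₁ - w) 0 with h₁ | h₁
  · rw [oddExt_of_neg h₁]
    linarith [incr (a := -(u₁ - w)) (b := -(u₂ - w)) (c := u₂ + w) (d := u₁ + w)
      (by linarith) (by linarith) (by linarith) (by linarith) (by ring)]
  -- `f` is superadditive, being convex with `f 0 ≤ 0`
  rw [oddExt_of_nonneg h₁]
  linarith [incr (a := 0) (b := -(u₂ - w)) (c := u₁ - w) (d := u₁ - u₂)
      le_rfl (by linarith) (by linarith) (by linarith) (by ring),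
    incr (a := 0) (b := u₂ + w) (c := u₁ - u₂) (d := u₁ + w)
      le_rfl (by linarith) (by linarith) (by linarith) (by ring)]

end OddExt

theorem hasDerivAt_abs_rpow_eq_oddExt {p : ℝ} (hp : 1 < p) (x : ℝ) :
    HasDerivAt (fun t : ℝ => |t| ^ p) (oddExt (fun t => p * t ^ (p - 1)) x) x := by
  convert hasDerivAt_abs_rpow x hp using 1
  have hpow : ∀ {t : ℝ}, 0 < t → t ^ (p - 1) = t ^ (p - 2) * t := fun ht => by
    rw [← Real.rpow_add_one ht.ne']; ring_nf
  rcases lt_trichotomy x 0 with hx | rfl | hx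
  · rw [oddExt_of_neg hx, abs_of_neg hx, hpow (neg_pos.2 hx)]; ring
  · simp [oddExt, Real.zero_rpow (by linarith : p - 1 ≠ 0)]
  · rw [oddExt_of_nonneg hx.le, abs_of_pos hx, hpow hx]; ring

theorem map_add_add_map_sub_supermodular {φ φ' : ℝ → ℝ} (hφ : ∀ t, HasDerivAt φ (φ' t) t)
    (hφ' : ∀ w, 0 ≤ w → MonotoneOn (fun u => φ' (u + w) - φ' (u - w)) (Ici 0))
    {u₁ u₂ v₁ v₂ : ℝ} (hu₂ : 0 ≤ u₂) (hu : u₂ ≤ u₁) (hv₂ : 0 ≤ v₂) (hv : v₂ ≤ v₁) :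
    (φ (u₂ + v₁) + φ (u₂ - v₁)) + (φ (u₁ + v₂) + φ (u₁ - v₂)) ≤
      (φ (u₂ + v₂) + φ (u₂ - v₂)) + (φ (u₁ + v₁) + φ (u₁ - v₁)) := by
  have hF : ∀ x y, HasDerivAt (fun y => φ (x + y) + φ (x - y)) (φ' (x + y) - φ' (x - y)) y :=
    fun x y => (((hφ _).comp_const_add x y).add ((hφ _).comp_const_sub x y)).congr_deriv
      (sub_eq_add_neg _ _).symm
  have hmono : MonotoneOn
      (fun y => (φ (u₁ + y) + φ (u₁ - y)) - (φ (u₂ + y) + φ (u₂ - y))) (Ici 0) :=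
    monotoneOn_of_hasDerivWithinAt_nonneg (convex_Ici 0)
      (fun y _ => ((hF u₁ y).sub (hF u₂ y)).continuousAt.continuousWithinAt)
      (fun y _ => ((hF u₁ y).sub (hF u₂ y)).hasDerivWithinAt)
      (fun y hy => sub_nonneg.2 <| hφ' y (interior_subset hy) hu₂ (hu₂.trans hu) hu)
  linarith [hmono hv₂ (hv₂.trans hv) hv]

theorem abs_rpow_supermodular {p : ℝ} (hp : 2 ≤ p) {u₁ u₂ v₁ v₂ : ℝ}
    (hu₂ : 0 ≤ u₂) (hu : u₂ ≤ u₁) (hv₂ : 0 ≤ v₂) (hv : v₂ ≤ v₁) :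
    (|u₂ + v₁| ^ p + |u₂ - v₁| ^ p) + (|u₁ + v₂| ^ p + |u₁ - v₂| ^ p) ≤
      (|u₂ + v₂| ^ p + |u₂ - v₂| ^ p) + (|u₁ + v₁| ^ p + |u₁ - v₁| ^ p) := by
  have hconv : ConvexOn ℝ (Ici 0) fun t : ℝ => p * t ^ (p - 1) :=
    (convexOn_rpow (by linarith)).smul (by linarith)
  exact map_add_add_map_sub_supermodular (hasDerivAt_abs_rpow_eq_oddExt (by linarith))
    (fun w => hconv.monotoneOn_oddExt_add_sub_oddExt_sub
      (by simp [Real.zero_rpow (by linarith : p - 1 ≠ 0)])) hu₂ hu hv₂ hv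

theorem abs_rpow_submodular {p : ℝ} (hp₁ : 1 < p) (hp₂ : p ≤ 2) {u₁ u₂ v₁ v₂ : ℝ}
    (hu₂ : 0 ≤ u₂) (hu : u₂ ≤ u₁) (hv₂ : 0 ≤ v₂) (hv : v₂ ≤ v₁) :
    (|u₂ + v₂| ^ p + |u₂ - v₂| ^ p) + (|u₁ + v₁| ^ p + |u₁ - v₁| ^ p) ≤
      (|u₂ + v₁| ^ p + |u₂ - v₁| ^ p) + (|u₁ + v₂| ^ p + |u₁ - v₂| ^ p) := by
  have hconv : ConvexOn ℝ (Ici 0) (-fun t : ℝ => p * t ^ (p - 1)) :=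
    ((Real.concaveOn_rpow (by linarith) (by linarith)).smul (by linarith)).neg
  have := map_add_add_map_sub_supermodular (φ := fun t => -|t| ^ p)
    (fun t => oddExt_neg ▸ (hasDerivAt_abs_rpow_eq_oddExt hp₁ t).neg)
    (fun w => hconv.monotoneOn_oddExt_add_sub_oddExt_sub
      (by simp [Real.zero_rpow (by linarith : p - 1 ≠ 0)])) hu₂ hu hv₂ hv
  linarith

theorem max_add_max_le_max_add_max {u₁ u₂ v₁ v₂ : ℝ} (hu : u₂ ≤ u₁) (hv : v₂ ≤ v₁) :
    max u₂ v₂ + max u₁ v₁ ≤ max u₂ v₁ + max u₁ v₂ := by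
  simp only [max_def]
  split_ifs <;> linarith

theorem abs_add_add_abs_sub_eq_two_mul_max {x y : ℝ} (hx : 0 ≤ x) (hy : 0 ≤ y) :
    |x + y| + |x - y| = 2 * max x y := by
  rw [abs_of_nonneg (add_nonneg hx hy), abs_sub_comm, ← two_nsmul_sup_eq_add_add_abs_sub,
    two_nsmul, two_mul]

theorem submodularity_of_hanner_kernel (p : ℝ) (u₁ u₂ v₁ v₂ : ℝ)
    (hu2 : 0 ≤ u₂) (hu : u₂ ≤ u₁) (hv2 : 0 ≤ v₂) (hv : v₂ ≤ v₁) :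
    (1 ≤ p → p ≤ 2 →
      (|u₂ + v₂| ^ p + |u₂ - v₂| ^ p) + (|u₁ + v₁| ^ p + |u₁ - v₁| ^ p) ≤
        (|u₂ + v₁| ^ p + |u₂ - v₁| ^ p) + (|u₁ + v₂| ^ p + |u₁ - v₂| ^ p)) ∧
    (2 ≤ p →
      (|u₂ + v₁| ^ p + |u₂ - v₁| ^ p) + (|u₁ + v₂| ^ p + |u₁ - v₂| ^ p) ≤
        (|u₂ + v₂| ^ p + |u₂ - v₂| ^ p) + (|u₁ + v₁| ^ p + |u₁ - v₁| ^ p)) := by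
  refine ⟨fun hp₁ hp₂ => ?_, fun hp => abs_rpow_supermodular hp hu2 hu hv2 hv⟩
  rcases hp₁.eq_or_lt with rfl | hp₁
  · have hu1 : 0 ≤ u₁ := hu2.trans hu
    have hv1 : 0 ≤ v₁ := hv2.trans hv
    simp only [Real.rpow_one, abs_add_add_abs_sub_eq_two_mul_max hu2 hv2,
      abs_add_add_abs_sub_eq_two_mul_max hu2 hv1, abs_add_add_abs_sub_eq_two_mul_max hu1 hv2,
      abs_add_add_abs_sub_eq_two_mul_max hu1 hv1]
    linarith [max_add_max_le_max_add_max hu hv]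
  · exact abs_rpow_submodular hp₁ hp₂ hu2 hu hv2 hv
end

section
/- For any n×n complex matrices A and B and any p ≥ 1, the p-Schatten quantities satisfy: if 1 ≤ p ≤ 2 then ‖A+B‖_p^p + ‖A−B‖_p^p ≤ 2(‖A‖_p^p + ‖B‖_p^p), and if p ≥ 2 then ‖A+B‖_p^p + ‖A−B‖_p^p ≤ 2^{p−1}(‖A‖_p^p + ‖B‖_p^p). -/
open Matrix Finset
open scoped ComplexOrder

/-!
Write `f x = x ^ (p / 2)`, so that `‖X‖_p^p = Tr f(XᴴX)`, and use the parallelogram law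
`|A + B|² + |A - B|² = 2 (|A|² + |B|²)`. Two facts about `H ↦ Tr f(H)` on positive semidefinite
matrices then give both inequalities: it is convex (concave) when `f` is, because in the
eigenbasis of `a H + b K` the diagonals of `H` and `K` are doubly stochastic images of their
spectra; and it is superadditive (subadditive) when moreover `f 0 = 0`, by pinching the block
matrix `T Tᴴ` with `T = [M 0; N 0]`, whose companion `Tᴴ T` is `diag (MᴴM + NᴴN, 0)`.
For `p ≤ 2` the function `f` is concave and `|A ± B|²` average to `|A|² + |B|²`; for `p ≥ 2` it
is convex, `|A + B|² + |A - B|²` is the average of `4|A|²` and `4|B|²`, and `f (4 x) = 2 ^ p f x`.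
-/

section DoublyStochastic

variable {n : Type*} [Fintype n] [DecidableEq n] {M : Matrix n n ℝ} {s : Set ℝ} {x : n → ℝ}

lemma Convex.mulVec_mem_of_mem_doublyStochastic (hs : Convex ℝ s)
    (hM : M ∈ doublyStochastic ℝ n) (hx : ∀ j, x j ∈ s) (i : n) : (M *ᵥ x) i ∈ s :=
  hs.sum_mem (fun _ _ => nonneg_of_mem_doublyStochastic hM)
    (sum_row_of_mem_doublyStochastic hM i) fun j _ => hx j

lemma ConvexOn.sum_comp_mulVec_le {f : ℝ → ℝ} (hf : ConvexOn ℝ s f)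
    (hM : M ∈ doublyStochastic ℝ n) (hx : ∀ j, x j ∈ s) :
    ∑ i, f ((M *ᵥ x) i) ≤ ∑ j, f (x j) :=
  calc ∑ i, f ((M *ᵥ x) i)
      ≤ ∑ i, ∑ j, M i j * f (x j) := sum_le_sum fun i _ =>
        hf.map_sum_le (fun _ _ => nonneg_of_mem_doublyStochastic hM)
          (sum_row_of_mem_doublyStochastic hM i) fun j _ => hx j
    _ = ∑ j, f (x j) := by
        rw [sum_comm]
        simp only [← sum_mul, sum_col_of_mem_doublyStochastic hM, one_mul]

lemma map_normSq_mem_doublyStochastic {U : Matrix n n ℂ} (hU : U ∈ unitaryGroup n ℂ) :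
    U.map Complex.normSq ∈ doublyStochastic ℝ n := by
  have hrow (i : n) : ((∑ j, U.map Complex.normSq i j : ℝ) : ℂ) = 1 := by
    rw [← one_apply_eq (α := ℂ) i, ← mem_unitaryGroup_iff.mp hU]
    simp [mul_apply, Complex.mul_conj]
  have hcol (j : n) : ((∑ i, U.map Complex.normSq i j : ℝ) : ℂ) = 1 := by
    rw [← one_apply_eq (α := ℂ) j, ← mem_unitaryGroup_iff'.mp hU]
    simp [mul_apply, Complex.mul_conj, mul_comm]
  exact mem_doublyStochastic_iff_sum.2 ⟨fun i j => Complex.normSq_nonneg _,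
    fun i => by exact_mod_cast hrow i, fun j => by exact_mod_cast hcol j⟩

end DoublyStochastic

namespace Matrix

lemma parallelogram_law_conjTranspose_mul_self {m : Type*} [Fintype m] (A B : Matrix m m ℂ) :
    (A + B)ᴴ * (A + B) + (A - B)ᴴ * (A - B) = (2 : ℝ) • (Aᴴ * A + Bᴴ * B) := by
  simp only [conjTranspose_add, conjTranspose_sub, Matrix.add_mul, Matrix.mul_add,
    Matrix.sub_mul, Matrix.mul_sub]
  module

variable {m n : Type*} [Fintype m] [DecidableEq m] [Fintype n] [DecidableEq n]

/-- `Tr f(H)` for Hermitian `H`, read off the characteristic polynomial so that it depends on the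
matrix alone and not on a proof that it is Hermitian. -/
noncomputable def traceFun (f : ℝ → ℝ) (H : Matrix m m ℂ) : ℝ :=
  (H.charpoly.roots.map fun z => f z.re).sum

section Basic

variable (f : ℝ → ℝ)

lemma traceFun_diagonal (d : m → ℂ) : traceFun f (diagonal d) = ∑ i, f (d i).re := by
  simp [traceFun, charpoly_diagonal, Polynomial.roots_prod, Polynomial.X_sub_C_ne_zero,
    Finset.prod_ne_zero_iff, Multiset.map_map]

lemma IsHermitian.traceFun_eq_sum_eigenvalues {H : Matrix m m ℂ} (hH : H.IsHermitian) :
    traceFun f H = ∑ i, f (hH.eigenvalues i) := by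
  simp [traceFun, hH.roots_charpoly_eq_eigenvalues, Multiset.map_map]

lemma traceFun_neg (H : Matrix m m ℂ) : traceFun (-f) H = -traceFun f H :=
  Multiset.sum_map_neg

lemma traceFun_mul_comm (A B : Matrix m m ℂ) : traceFun f (A * B) = traceFun f (B * A) := by
  rw [traceFun, charpoly_mul_comm, traceFun]

lemma charpoly_unitary_conj {U : Matrix m m ℂ} (hU : U ∈ unitaryGroup m ℂ) (X : Matrix m m ℂ) :
    (U * X * star U).charpoly = X.charpoly := by
  rw [charpoly_mul_comm, ← Matrix.mul_assoc, mem_unitaryGroup_iff'.mp hU, Matrix.one_mul]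

lemma traceFun_unitary_conj {U : Matrix m m ℂ} (hU : U ∈ unitaryGroup m ℂ) (X : Matrix m m ℂ) :
    traceFun f (U * X * star U) = traceFun f X := by
  rw [traceFun, charpoly_unitary_conj hU, traceFun]

lemma traceFun_fromBlocks_zero₁₂ (P : Matrix m m ℂ) (Q : Matrix n m ℂ) (R : Matrix n n ℂ) :
    traceFun f (fromBlocks P 0 Q R) = traceFun f P + traceFun f R := by
  rw [traceFun, charpoly_fromBlocks_zero₁₂, Polynomial.roots_mul
    (mul_ne_zero (charpoly_monic P).ne_zero (charpoly_monic R).ne_zero),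
    Multiset.map_add, Multiset.sum_add, traceFun, traceFun]

lemma IsHermitian.traceFun_real_smul {H : Matrix m m ℂ} (hH : H.IsHermitian) (c : ℝ) :
    traceFun f (c • H) = traceFun (fun x => f (c * x)) H := by
  have hconj : c • H = hH.eigenvectorUnitary
      * diagonal (fun i => ((c * hH.eigenvalues i : ℝ) : ℂ))
      * star (hH.eigenvectorUnitary : Matrix m m ℂ) := by
    have hdiag : diagonal (fun i => ((c * hH.eigenvalues i : ℝ) : ℂ))
        = c • diagonal (RCLike.ofReal ∘ hH.eigenvalues) := by
      ext i j
      by_cases hij : i = j <;> simp [hij, Complex.real_smul]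
    conv_lhs => rw [hH.spectral_theorem, Unitary.conjStarAlgAut_apply]
    rw [hdiag, Matrix.mul_smul, Matrix.smul_mul]
  rw [hconj, traceFun_unitary_conj _ hH.eigenvectorUnitary.2, traceFun_diagonal,
    hH.traceFun_eq_sum_eigenvalues]
  simp

end Basic

lemma traceFun_zero {f : ℝ → ℝ} (hf0 : f 0 = 0) : traceFun f (0 : Matrix m m ℂ) = 0 := by
  simpa [hf0] using traceFun_diagonal f (0 : m → ℂ)

lemma PosSemidef.traceFun_rpow_smul {H : Matrix m m ℂ} (hH : H.PosSemidef) {c : ℝ} (hc : 0 ≤ c)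
    (q : ℝ) : traceFun (· ^ q) (c • H) = c ^ q * traceFun (· ^ q) H := by
  rw [hH.isHermitian.traceFun_real_smul, hH.isHermitian.traceFun_eq_sum_eigenvalues,
    hH.isHermitian.traceFun_eq_sum_eigenvalues, mul_sum]
  exact sum_congr rfl fun i _ => Real.mul_rpow hc (hH.eigenvalues_nonneg i)

lemma IsHermitian.exists_mem_doublyStochastic_re_diag_eq {H : Matrix m m ℂ} (hH : H.IsHermitian)
    {W : Matrix m m ℂ} (hW : W ∈ unitaryGroup m ℂ) :
    ∃ M ∈ doublyStochastic ℝ m, (fun i => ((star W * H * W) i i).re) = M *ᵥ hH.eigenvalues := by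
  set Z := star W * (hH.eigenvectorUnitary : Matrix m m ℂ)
  have hZ : Z ∈ unitaryGroup m ℂ :=
    Submonoid.mul_mem _ (Unitary.star_mem hW) hH.eigenvectorUnitary.2
  have hconj : star W * H * W = Z * diagonal (RCLike.ofReal ∘ hH.eigenvalues) * star Z := by
    conv_lhs => rw [hH.spectral_theorem, Unitary.conjStarAlgAut_apply]
    simp [Z, Matrix.mul_assoc, star_mul]
  refine ⟨Z.map Complex.normSq, map_normSq_mem_doublyStochastic hZ, funext fun i => ?_⟩
  have hentry : (Z * diagonal (RCLike.ofReal ∘ hH.eigenvalues) * star Z : Matrix m m ℂ) i i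
      = ((Z.map Complex.normSq *ᵥ hH.eigenvalues) i : ℂ) := by
    rw [mul_apply]
    simp only [mul_diagonal, star_apply, mulVec, dotProduct, map_apply, Function.comp_apply,
      Complex.ofReal_sum, Complex.ofReal_mul, ← Complex.mul_conj]
    exact sum_congr rfl fun j _ => mul_right_comm _ _ _
  rw [hconj, hentry, Complex.ofReal_re]

variable {f : ℝ → ℝ} {s : Set ℝ}

lemma traceFun_smul_add_smul_le (hf : ConvexOn ℝ s f) {H K : Matrix m m ℂ} (hH : H.IsHermitian)
    (hK : K.IsHermitian) (hHs : ∀ i, hH.eigenvalues i ∈ s) (hKs : ∀ i, hK.eigenvalues i ∈ s)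
    {a b : ℝ} (ha : 0 ≤ a) (hb : 0 ≤ b) (hab : a + b = 1) :
    traceFun f (a • H + b • K) ≤ a * traceFun f H + b * traceFun f K := by
  have hG : (a • H + b • K).IsHermitian :=
    (hH.smul (IsSelfAdjoint.all a)).add (hK.smul (IsSelfAdjoint.all b))
  have hW := hG.eigenvectorUnitary.2
  obtain ⟨MH, hMH, hdH⟩ := hH.exists_mem_doublyStochastic_re_diag_eq hW
  obtain ⟨MK, hMK, hdK⟩ := hK.exists_mem_doublyStochastic_re_diag_eq hW
  have hev (i : m) :
      hG.eigenvalues i = a * (MH *ᵥ hH.eigenvalues) i + b * (MK *ᵥ hK.eigenvalues) i := by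
    have := congrArg (fun X => (X i i).re) hG.conjStarAlgAut_star_eigenvectorUnitary
    simp only [Unitary.conjStarAlgAut_star_apply, Matrix.mul_add, Matrix.add_mul,
      Matrix.mul_smul, Matrix.smul_mul, add_apply, smul_apply, Complex.add_re, Complex.smul_re,
      diagonal_apply_eq, Function.comp_apply, smul_eq_mul] at this
    rw [← congrFun hdH i, ← congrFun hdK i]
    simpa using this.symm
  rw [hG.traceFun_eq_sum_eigenvalues, hH.traceFun_eq_sum_eigenvalues,
    hK.traceFun_eq_sum_eigenvalues]
  calc ∑ i, f (hG.eigenvalues i)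
      ≤ ∑ i, (a * f ((MH *ᵥ hH.eigenvalues) i) + b * f ((MK *ᵥ hK.eigenvalues) i)) :=
        sum_le_sum fun i _ => hev i ▸ hf.2 (hf.1.mulVec_mem_of_mem_doublyStochastic hMH hHs i)
          (hf.1.mulVec_mem_of_mem_doublyStochastic hMK hKs i) ha hb hab
    _ = a * ∑ i, f ((MH *ᵥ hH.eigenvalues) i) + b * ∑ i, f ((MK *ᵥ hK.eigenvalues) i) := by
        rw [sum_add_distrib, mul_sum, mul_sum]
    _ ≤ a * ∑ i, f (hH.eigenvalues i) + b * ∑ i, f (hK.eigenvalues i) := by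
        gcongr a * ?_ + b * ?_
        · exact hf.sum_comp_mulVec_le hMH hHs
        · exact hf.sum_comp_mulVec_le hMK hKs

lemma le_traceFun_smul_add_smul (hf : ConcaveOn ℝ s f) {H K : Matrix m m ℂ} (hH : H.IsHermitian)
    (hK : K.IsHermitian) (hHs : ∀ i, hH.eigenvalues i ∈ s) (hKs : ∀ i, hK.eigenvalues i ∈ s)
    {a b : ℝ} (ha : 0 ≤ a) (hb : 0 ≤ b) (hab : a + b = 1) :
    a * traceFun f H + b * traceFun f K ≤ traceFun f (a • H + b • K) := by
  have := traceFun_smul_add_smul_le (neg_convexOn_iff.2 hf) hH hK hHs hKs ha hb hab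
  simp only [traceFun_neg] at this
  linarith

lemma traceFun_add_traceFun_le_fromBlocks (hf : ConvexOn ℝ s f) {P : Matrix m m ℂ}
    {Q : Matrix m n ℂ} {Q' : Matrix n m ℂ} {R : Matrix n n ℂ}
    (hX : (fromBlocks P Q Q' R).IsHermitian) (hXs : ∀ i, hX.eigenvalues i ∈ s) :
    traceFun f P + traceFun f R ≤ traceFun f (fromBlocks P Q Q' R) := by
  -- Conjugating by `J = diag (1, -1)` flips the off-diagonal blocks, and the average kills them.
  set J : Matrix (m ⊕ n) (m ⊕ n) ℂ := fromBlocks 1 0 0 (-1)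
  have hJ : J ∈ unitaryGroup (m ⊕ n) ℂ := by
    simp [J, mem_unitaryGroup_iff, star_eq_conjTranspose, fromBlocks_conjTranspose,
      fromBlocks_multiply, ← fromBlocks_one]
  have hJX : J * fromBlocks P Q Q' R * star J = fromBlocks P (-Q) (-Q') R := by
    simp [J, star_eq_conjTranspose, fromBlocks_conjTranspose, fromBlocks_multiply]
  have hX' : (fromBlocks P (-Q) (-Q') R).IsHermitian :=
    hJX ▸ isHermitian_mul_mul_conjTranspose J hX
  have hX's : ∀ i, hX'.eigenvalues i ∈ s := by
    rwa [(hX'.eigenvalues_eq_eigenvalues_iff hX).2 (hJX ▸ charpoly_unitary_conj hJ _)]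
  have hpinch : fromBlocks P 0 0 R
      = (1 / 2 : ℝ) • fromBlocks P Q Q' R + (1 / 2 : ℝ) • fromBlocks P (-Q) (-Q') R := by
    rw [fromBlocks_smul, fromBlocks_smul, fromBlocks_add]
    congr 1 <;> module
  calc traceFun f P + traceFun f R = traceFun f (fromBlocks P 0 0 R) :=
        (traceFun_fromBlocks_zero₁₂ f P 0 R).symm
    _ ≤ 1 / 2 * traceFun f (fromBlocks P Q Q' R)
          + 1 / 2 * traceFun f (fromBlocks P (-Q) (-Q') R) := by
        rw [hpinch]
        exact traceFun_smul_add_smul_le hf hX hX' hXs hX's (by norm_num) (by norm_num)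
          (by norm_num)
    _ = traceFun f (fromBlocks P Q Q' R) := by
        rw [← hJX, traceFun_unitary_conj f hJ]
        ring

open scoped MatrixOrder in
lemma traceFun_add_traceFun_le_traceFun_add (hf : ConvexOn ℝ (Set.Ici 0) f) (hf0 : f 0 = 0)
    {H K : Matrix m m ℂ} (hH : H.PosSemidef) (hK : K.PosSemidef) :
    traceFun f H + traceFun f K ≤ traceFun f (H + K) := by
  obtain ⟨M, rfl⟩ := CStarAlgebra.nonneg_iff_eq_star_mul_self.mp hH.nonneg
  obtain ⟨N, rfl⟩ := CStarAlgebra.nonneg_iff_eq_star_mul_self.mp hK.nonneg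
  set T : Matrix (m ⊕ m) (m ⊕ m) ℂ := fromBlocks M 0 N 0
  have hTT : T * Tᴴ = fromBlocks (M * Mᴴ) (M * Nᴴ) (N * Mᴴ) (N * Nᴴ) := by
    simp [T, fromBlocks_conjTranspose, fromBlocks_multiply]
  have hTT' : Tᴴ * T = fromBlocks (Mᴴ * M + Nᴴ * N) 0 0 0 := by
    simp [T, fromBlocks_conjTranspose, fromBlocks_multiply]
  have hpsd := posSemidef_self_mul_conjTranspose T
  rw [hTT] at hpsd
  calc traceFun f (star M * M) + traceFun f (star N * N)
      = traceFun f (M * Mᴴ) + traceFun f (N * Nᴴ) := by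
        rw [traceFun_mul_comm f (star M), traceFun_mul_comm f (star N)]
        rfl
    _ ≤ traceFun f (fromBlocks (M * Mᴴ) (M * Nᴴ) (N * Mᴴ) (N * Nᴴ)) :=
        traceFun_add_traceFun_le_fromBlocks hf hpsd.isHermitian hpsd.eigenvalues_nonneg
    _ = traceFun f (star M * M + star N * N) := by
        rw [← hTT, traceFun_mul_comm, hTT', traceFun_fromBlocks_zero₁₂, traceFun_zero hf0,
          add_zero]
        rfl

lemma traceFun_add_le_traceFun_add_traceFun (hf : ConcaveOn ℝ (Set.Ici 0) f) (hf0 : f 0 = 0)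
    {H K : Matrix m m ℂ} (hH : H.PosSemidef) (hK : K.PosSemidef) :
    traceFun f (H + K) ≤ traceFun f H + traceFun f K := by
  have := traceFun_add_traceFun_le_traceFun_add (neg_convexOn_iff.2 hf) (by simp [hf0]) hH hK
  simp only [traceFun_neg] at this
  linarith

lemma traceFun_rpow_add_add_sub_le_of_le_two {p : ℝ} (hp0 : 0 < p) (hp2 : p ≤ 2)
    (A B : Matrix m m ℂ) :
    traceFun (· ^ (p / 2)) ((A + B)ᴴ * (A + B)) + traceFun (· ^ (p / 2)) ((A - B)ᴴ * (A - B))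
      ≤ 2 * (traceFun (· ^ (p / 2)) (Aᴴ * A) + traceFun (· ^ (p / 2)) (Bᴴ * B)) := by
  have hpsd (X : Matrix m m ℂ) := posSemidef_conjTranspose_mul_self X
  have hf : ConcaveOn ℝ (Set.Ici 0) fun x : ℝ => x ^ (p / 2) :=
    Real.concaveOn_rpow (by linarith) (by linarith)
  have hmid : Aᴴ * A + Bᴴ * B
      = (1 / 2 : ℝ) • ((A + B)ᴴ * (A + B)) + (1 / 2 : ℝ) • ((A - B)ᴴ * (A - B)) := by
    rw [← smul_add, parallelogram_law_conjTranspose_mul_self, smul_smul]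
    norm_num
  calc _ = 2 * (1 / 2 * traceFun (· ^ (p / 2)) ((A + B)ᴴ * (A + B))
        + 1 / 2 * traceFun (· ^ (p / 2)) ((A - B)ᴴ * (A - B))) := by ring
    _ ≤ 2 * traceFun (· ^ (p / 2)) (Aᴴ * A + Bᴴ * B) := by
        rw [hmid]
        gcongr
        exact le_traceFun_smul_add_smul hf (hpsd _).isHermitian (hpsd _).isHermitian
          (hpsd _).eigenvalues_nonneg (hpsd _).eigenvalues_nonneg (by norm_num) (by norm_num)
          (by norm_num)
    _ ≤ _ := by
        gcongr
        exact traceFun_add_le_traceFun_add_traceFun hf (Real.zero_rpow (by linarith))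
          (hpsd A) (hpsd B)

lemma traceFun_rpow_add_add_sub_le_of_two_le {p : ℝ} (hp : 2 ≤ p) (A B : Matrix m m ℂ) :
    traceFun (· ^ (p / 2)) ((A + B)ᴴ * (A + B)) + traceFun (· ^ (p / 2)) ((A - B)ᴴ * (A - B))
      ≤ 2 ^ (p - 1) * (traceFun (· ^ (p / 2)) (Aᴴ * A) + traceFun (· ^ (p / 2)) (Bᴴ * B)) := by
  have hpsd (X : Matrix m m ℂ) := posSemidef_conjTranspose_mul_self X
  have h4 (X : Matrix m m ℂ) : ((4 : ℝ) • (Xᴴ * X)).PosSemidef := (hpsd X).smul (by norm_num)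
  have hf : ConvexOn ℝ (Set.Ici 0) fun x : ℝ => x ^ (p / 2) := convexOn_rpow (by linarith)
  have hmid : (A + B)ᴴ * (A + B) + (A - B)ᴴ * (A - B)
      = (1 / 2 : ℝ) • ((4 : ℝ) • (Aᴴ * A)) + (1 / 2 : ℝ) • ((4 : ℝ) • (Bᴴ * B)) := by
    rw [parallelogram_law_conjTranspose_mul_self]
    module
  have h42 : (4 : ℝ) ^ (p / 2) = 2 ^ p := by
    rw [show (4 : ℝ) = 2 ^ (2 : ℝ) by norm_num, ← Real.rpow_mul (by norm_num)]
    ring_nf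
  calc _ ≤ traceFun (· ^ (p / 2)) ((A + B)ᴴ * (A + B) + (A - B)ᴴ * (A - B)) :=
        traceFun_add_traceFun_le_traceFun_add hf (Real.zero_rpow (by linarith)) (hpsd _) (hpsd _)
    _ ≤ 1 / 2 * traceFun (· ^ (p / 2)) ((4 : ℝ) • (Aᴴ * A))
          + 1 / 2 * traceFun (· ^ (p / 2)) ((4 : ℝ) • (Bᴴ * B)) := by
        rw [hmid]
        exact traceFun_smul_add_smul_le hf (h4 A).isHermitian (h4 B).isHermitian
          (h4 A).eigenvalues_nonneg (h4 B).eigenvalues_nonneg (by norm_num) (by norm_num)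
          (by norm_num)
    _ = _ := by
        rw [(hpsd A).traceFun_rpow_smul (by norm_num), (hpsd B).traceFun_rpow_smul (by norm_num),
          h42, Real.rpow_sub two_pos, Real.rpow_one]
        ring

end Matrix

lemma schattenPow_eq_traceFun {n : ℕ} (p : ℝ) (X : Matrix (Fin n) (Fin n) ℂ) :
    schattenPow p X = traceFun (· ^ (p / 2)) (Xᴴ * X) := by
  have hX := posSemidef_conjTranspose_mul_self X
  rw [hX.isHermitian.traceFun_eq_sum_eigenvalues, schattenPow]
  refine sum_congr rfl fun i _ => ?_
  rw [sv, Real.sqrt_eq_rpow, ← Real.rpow_mul (hX.eigenvalues_nonneg i), one_div_mul_eq_div]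

theorem clarkson_type_inequalities {n : ℕ}
    (A B : Matrix (Fin n) (Fin n) ℂ) (p : ℝ) :
    (1 ≤ p → p ≤ 2 →
      schattenPow p (A + B) + schattenPow p (A - B) ≤
        2 * (schattenPow p A + schattenPow p B)) ∧
    (2 ≤ p →
      schattenPow p (A + B) + schattenPow p (A - B) ≤
        (2 : ℝ) ^ (p - 1) * (schattenPow p A + schattenPow p B)) := by
  simp only [schattenPow_eq_traceFun]
  exact ⟨fun hp1 hp2 => traceFun_rpow_add_add_sub_le_of_le_two (by linarith) hp2 A B,
    fun hp2 => traceFun_rpow_add_add_sub_le_of_two_le hp2 A B⟩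
end
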